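/- arXiv:0709.0935 — 9 statements merged into one kernel-verified Lean document; each statement's English description precedes it below -/
import Mathlib

section
/- The negative index poly-Bernoulli numbers are symmetric: B(m,n) = B(n,m) for all nonnegative integers m, n, where B(l,k) = Σ_{i=0}^{l} (-1)^{l-i} i! S(l,i) (i+1)^k and S(l,i) is the Stirling number of the second kind. -/
/-- Stirling numbers of the second kind, `S(l,k) = (1/k!) ∑_{i=0}^k (-1)^{k-i} C(k,i) i^l`. -/
noncomputable def stirling2 (l k : ℕ) : ℚ :=
  (1 / (Nat.factorial k : ℚ)) * ∑ i ∈ Finset.range (k + 1),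
    (-1 : ℚ) ^ (k - i) * (Nat.choose k i : ℚ) * (i : ℚ) ^ l

/-- Negative index poly-Bernoulli numbers,
`B(l,k) = ∑_{i=0}^l (-1)^{l-i} i! S(l,i) (i+1)^k`. -/
noncomputable def polyBernoulli (l k : ℕ) : ℚ :=
  ∑ i ∈ Finset.range (l + 1),
    (-1 : ℚ) ^ (l - i) * (Nat.factorial i : ℚ) * stirling2 l i * ((i : ℚ) + 1) ^ k

open Finset

noncomputable def DD (l k : ℕ) : ℚ :=
  ∑ i ∈ Finset.range (k + 1), (-1 : ℚ) ^ i * (Nat.choose k i : ℚ) * (i : ℚ) ^ l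

lemma DD_zero_right (l : ℕ) : DD l 0 = if l = 0 then 1 else 0 := by
  simp [DD, zero_pow_eq]

lemma DD_zero_right' (l : ℕ) (h : l ≠ 0) : DD l 0 = 0 := by
  simp [DD_zero_right, h]

lemma neg_one_pow_sub (i k : ℕ) (h : i ≤ k) : ((-1 : ℚ)) ^ (k - i) = (-1) ^ k * (-1) ^ i := by
  have h1 : ((-1 : ℚ)) ^ (k - i) * (-1) ^ i = (-1) ^ k := by
    rw [← pow_add, Nat.sub_add_cancel h]
  have h2 : ((-1 : ℚ)) ^ i * (-1) ^ i = 1 := by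
    rw [← pow_add]; exact Even.neg_one_pow ⟨i, rfl⟩
  calc ((-1 : ℚ)) ^ (k - i) = ((-1 : ℚ)) ^ (k - i) * ((-1) ^ i * (-1) ^ i) := by rw [h2, mul_one]
    _ = (((-1 : ℚ)) ^ (k - i) * (-1) ^ i) * (-1) ^ i := by ring
    _ = (-1) ^ k * (-1) ^ i := by rw [h1]

lemma polyB_eq (l k : ℕ) :
    polyBernoulli l k = (-1 : ℚ) ^ l * ∑ j ∈ range (l + 1), DD l j * ((j : ℚ) + 1) ^ k := by
  rw [polyBernoulli, mul_sum]
  refine sum_congr rfl fun j hj => ?_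
  have hjl : j ≤ l := Nat.lt_succ_iff.mp (mem_range.mp hj)
  rw [stirling2]
  have hfac : (Nat.factorial j : ℚ) ≠ 0 := Nat.cast_ne_zero.mpr (Nat.factorial_ne_zero j)
  have hsum : ∑ i ∈ Finset.range (j + 1), (-1 : ℚ) ^ (j - i) * (Nat.choose j i : ℚ) * (i : ℚ) ^ l
      = (-1) ^ j * DD l j := by
    rw [DD, mul_sum]
    refine sum_congr rfl fun i hi => ?_
    rw [neg_one_pow_sub i j (Nat.lt_succ_iff.mp (mem_range.mp hi))]; ring
  rw [hsum, neg_one_pow_sub j l hjl]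
  have h2 : ((-1 : ℚ)) ^ (j * 2) = 1 := Even.neg_one_pow ⟨j, by ring⟩
  field_simp
  ring_nf
  rw [h2]
  ring

lemma DD_shift (l j : ℕ) :
    ∑ t ∈ range (j + 1), (-1 : ℚ) ^ t * (Nat.choose j t : ℚ) * ((t : ℚ) + 1) ^ l
      = DD l j - DD l (j + 1) := by
  have e1 : DD l (j + 1)
      = ∑ t ∈ range (j + 1), (-1 : ℚ) ^ (t+1) * (Nat.choose (j+1) (t+1) : ℚ) * ((t : ℚ) + 1) ^ l
        + (0 : ℚ) ^ l := by
    rw [DD, Finset.sum_range_succ' (fun i => (-1 : ℚ) ^ i * (Nat.choose (j+1) i : ℚ) * (i : ℚ) ^ l) (j+1)]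
    push_cast
    simp
  have e2 : ∀ t, (Nat.choose (j+1) (t+1) : ℚ) = (Nat.choose j t : ℚ) + (Nat.choose j (t+1) : ℚ) := by
    intro t; rw [Nat.choose_succ_succ]; push_cast; ring
  have e3 : ∑ t ∈ range (j + 1), (-1 : ℚ) ^ (t+1) * (Nat.choose j (t+1) : ℚ) * ((t : ℚ) + 1) ^ l
      = DD l j - (0:ℚ) ^ l := by
    have : DD l j = ∑ t ∈ range j, (-1 : ℚ) ^ (t+1) * (Nat.choose j (t+1) : ℚ) * ((t : ℚ) + 1) ^ l
        + (0 : ℚ) ^ l := by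
      rw [DD, Finset.sum_range_succ' (fun i => (-1 : ℚ) ^ i * (Nat.choose j i : ℚ) * (i : ℚ) ^ l) j]
      push_cast
      simp
    rw [Finset.sum_range_succ, this]
    simp
  have e4 : ∑ t ∈ range (j + 1), (-1 : ℚ) ^ (t+1) * (Nat.choose (j+1) (t+1) : ℚ) * ((t : ℚ) + 1) ^ l
      = ∑ t ∈ range (j + 1), ((-1 : ℚ) ^ (t+1) * (Nat.choose j t : ℚ) * ((t : ℚ) + 1) ^ l
          + (-1 : ℚ) ^ (t+1) * (Nat.choose j (t+1) : ℚ) * ((t : ℚ) + 1) ^ l) := by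
    refine sum_congr rfl fun t _ => ?_
    rw [e2]; ring
  rw [e1, e4, Finset.sum_add_distrib, e3]
  have e5 : ∑ t ∈ range (j + 1), (-1 : ℚ) ^ (t+1) * (Nat.choose j t : ℚ) * ((t : ℚ) + 1) ^ l
      = - ∑ t ∈ range (j + 1), (-1 : ℚ) ^ t * (Nat.choose j t : ℚ) * ((t : ℚ) + 1) ^ l := by
    rw [← Finset.sum_neg_distrib]
    refine sum_congr rfl fun t _ => ?_
    ring
  rw [e5]
  ring

lemma DD_succ_succ (l j : ℕ) :
    DD (l + 1) (j + 1) = ((j : ℚ) + 1) * (DD l (j + 1) - DD l j) := by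
  have e1 : DD (l+1) (j + 1)
      = ∑ t ∈ range (j + 1), (-1 : ℚ) ^ (t+1) * (Nat.choose (j+1) (t+1) : ℚ) * ((t : ℚ) + 1) ^ (l+1) := by
    rw [DD, Finset.sum_range_succ' (fun i => (-1 : ℚ) ^ i * (Nat.choose (j+1) i : ℚ) * (i : ℚ) ^ (l+1)) (j+1)]
    push_cast
    simp
  have e2 : ∀ t, (Nat.choose (j+1) (t+1) : ℚ) * ((t:ℚ)+1) = ((j:ℚ)+1) * (Nat.choose j t : ℚ) := by
    intro t
    have := Nat.add_one_mul_choose_eq j t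
    have h : ((j+1) * Nat.choose j t : ℕ) = (Nat.choose (j+1) (t+1) * (t+1) : ℕ) := this
    have h2 := congrArg (fun x : ℕ => (x : ℚ)) h
    push_cast at h2
    linarith
  have e3 : DD (l+1) (j+1)
      = -((j:ℚ)+1) * ∑ t ∈ range (j + 1), (-1 : ℚ) ^ t * (Nat.choose j t : ℚ) * ((t : ℚ) + 1) ^ l := by
    rw [e1, Finset.mul_sum]
    refine sum_congr rfl fun t _ => ?_
    have : ((t:ℚ)+1)^(l+1) = ((t:ℚ)+1)^l * ((t:ℚ)+1) := by ring
    rw [this]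
    have := e2 t
    calc (-1 : ℚ) ^ (t+1) * (Nat.choose (j+1) (t+1) : ℚ) * (((t : ℚ) + 1) ^ l * ((t:ℚ)+1))
        = (-1 : ℚ) ^ (t+1) * ((Nat.choose (j+1) (t+1) : ℚ) * ((t:ℚ)+1)) * ((t : ℚ) + 1) ^ l := by ring
      _ = (-1 : ℚ) ^ (t+1) * (((j:ℚ)+1) * (Nat.choose j t : ℚ)) * ((t : ℚ) + 1) ^ l := by rw [e2]
      _ = -((j:ℚ)+1) * ((-1 : ℚ) ^ t * (Nat.choose j t : ℚ) * ((t : ℚ) + 1) ^ l) := by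
          rw [pow_succ]; ring
  rw [e3, DD_shift]
  ring

lemma DD_vanish : ∀ l k : ℕ, l < k → DD l k = 0 := by
  intro l
  induction l with
  | zero =>
    intro k hk
    obtain ⟨j, rfl⟩ : ∃ j, k = j + 1 := ⟨k - 1, by omega⟩
    have h := Int.alternating_sum_range_choose (n := j + 1)
    rw [if_neg (by omega)] at h
    have h2 := congrArg (fun x : ℤ => (x : ℚ)) h
    push_cast at h2
    rw [DD]
    rw [← h2]
    refine sum_congr rfl fun i _ => ?_
    simp
  | succ l ih =>
    intro k hk
    obtain ⟨j, rfl⟩ : ∃ j, k = j + 1 := ⟨k - 1, by omega⟩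
    rw [DD_succ_succ, ih (j+1) (by omega), ih j (by omega)]
    ring

lemma DD_one_right (l : ℕ) (h : 1 ≤ l) : DD l 1 = -1 := by
  rw [DD]
  rw [Finset.sum_range_succ, Finset.sum_range_one]
  have hl : l ≠ 0 := by omega
  simp [zero_pow_eq, hl]

lemma fe_eq (n t : ℕ) :
    ∑ s ∈ range (t + 1), (-1 : ℚ) ^ s * (Nat.choose t s : ℚ) * ((s : ℚ) + 1) ^ n
      = ∑ c ∈ range (n + 1), (Nat.choose n c : ℚ) * DD c t := by
  have e1 : ∀ s : ℕ, ((s : ℚ) + 1) ^ n = ∑ c ∈ range (n + 1), (s:ℚ)^c * (Nat.choose n c : ℚ) := by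
    intro s
    have := add_pow (s : ℚ) 1 n
    simpa using this
  calc ∑ s ∈ range (t + 1), (-1 : ℚ) ^ s * (Nat.choose t s : ℚ) * ((s : ℚ) + 1) ^ n
      = ∑ s ∈ range (t + 1), ∑ c ∈ range (n + 1),
          (Nat.choose n c : ℚ) * ((-1 : ℚ) ^ s * (Nat.choose t s : ℚ) * (s:ℚ)^c) := by
        refine sum_congr rfl fun s _ => ?_
        rw [e1, Finset.mul_sum]
        refine sum_congr rfl fun c _ => ?_
        ring
    _ = ∑ c ∈ range (n + 1), ∑ s ∈ range (t + 1),
          (Nat.choose n c : ℚ) * ((-1 : ℚ) ^ s * (Nat.choose t s : ℚ) * (s:ℚ)^c) :=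
        Finset.sum_comm
    _ = ∑ c ∈ range (n + 1), (Nat.choose n c : ℚ) * DD c t := by
        refine sum_congr rfl fun c _ => ?_
        rw [DD, Finset.mul_sum]

lemma DD_step (n t : ℕ) :
    DD n (t + 1) = DD n t - ∑ c ∈ range (n + 1), (Nat.choose n c : ℚ) * DD c t := by
  rw [← fe_eq]
  have := DD_shift n t
  linarith

lemma pow_expand (N : ℕ) :
    ∀ x : ℕ, x ≤ N → ∀ n : ℕ,
      ((x : ℚ)) ^ n = ∑ k ∈ range (N + 1), (Nat.choose x k : ℚ) * (-1) ^ k * DD n k := by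
  intro x
  induction x with
  | zero =>
    intro _ n
    rw [Finset.sum_eq_single 0]
    · simp [DD, zero_pow_eq]
    · intro k _ hk
      rw [Nat.choose_eq_zero_of_lt (by omega)]
      simp
    · intro h; exact absurd (mem_range.mpr (by omega)) h
  | succ x ih =>
    intro hxN n
    have hx : x ≤ N := by omega
    have hxlt : x < N := by omega
    have hCxN : (Nat.choose x N : ℚ) = 0 := by rw [Nat.choose_eq_zero_of_lt hxlt]; simp
    -- LHS sum over k, peel k = 0
    have e1 : ∑ k ∈ range (N + 1), (Nat.choose (x+1) k : ℚ) * (-1) ^ k * DD n k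
        = ∑ t ∈ range N, (Nat.choose (x+1) (t+1) : ℚ) * (-1) ^ (t+1) * DD n (t+1) + DD n 0 := by
      rw [Finset.sum_range_succ' (fun k => (Nat.choose (x+1) k : ℚ) * (-1) ^ k * DD n k) N]
      simp
    have pascal : ∀ t : ℕ, (Nat.choose (x+1) (t+1) : ℚ) = (Nat.choose x t : ℚ) + (Nat.choose x (t+1) : ℚ) := by
      intro t; rw [Nat.choose_succ_succ]; push_cast; ring
    have e2 : ∑ t ∈ range N, (Nat.choose (x+1) (t+1) : ℚ) * (-1) ^ (t+1) * DD n (t+1)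
        = ∑ t ∈ range N, (Nat.choose x (t+1) : ℚ) * (-1) ^ (t+1) * DD n (t+1)
          + ∑ t ∈ range N, (Nat.choose x t : ℚ) * (-1) ^ (t+1) * DD n (t+1) := by
      rw [← Finset.sum_add_distrib]
      refine sum_congr rfl fun t _ => ?_
      rw [pascal]; ring
    have e3 : ∑ t ∈ range N, (Nat.choose x (t+1) : ℚ) * (-1) ^ (t+1) * DD n (t+1) + DD n 0
        = (x : ℚ) ^ n := by
      rw [ih hx n, Finset.sum_range_succ' (fun k => (Nat.choose x k : ℚ) * (-1) ^ k * DD n k) N]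
      simp
    -- the A-sum
    have e4 : ∑ t ∈ range N, (Nat.choose x t : ℚ) * (-1) ^ (t+1) * DD n (t+1)
        = ∑ t ∈ range (N+1), (Nat.choose x t : ℚ) * (-1) ^ (t+1) * DD n (t+1) := by
      rw [Finset.sum_range_succ, hCxN]
      simp
    have e5 : ∑ t ∈ range (N+1), (Nat.choose x t : ℚ) * (-1) ^ (t+1) * DD n (t+1)
        = - ∑ t ∈ range (N+1), (Nat.choose x t : ℚ) * (-1) ^ t * DD n t
          + ∑ c ∈ range (n+1), (Nat.choose n c : ℚ) *
              (∑ t ∈ range (N+1), (Nat.choose x t : ℚ) * (-1) ^ t * DD c t) := by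
      rw [← Finset.sum_neg_distrib]
      have swap : ∑ c ∈ range (n+1), (Nat.choose n c : ℚ) *
              (∑ t ∈ range (N+1), (Nat.choose x t : ℚ) * (-1) ^ t * DD c t)
          = ∑ t ∈ range (N+1), ∑ c ∈ range (n+1),
              (Nat.choose n c : ℚ) * ((Nat.choose x t : ℚ) * (-1) ^ t * DD c t) := by
        rw [Finset.sum_comm]
        refine sum_congr rfl fun c _ => ?_
        rw [Finset.mul_sum]
      rw [swap, ← Finset.sum_add_distrib]
      refine sum_congr rfl fun t _ => ?_
      have hs : ∑ c ∈ range (n+1), (Nat.choose n c : ℚ) * ((Nat.choose x t : ℚ) * (-1)^t * DD c t)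
          = (Nat.choose x t : ℚ) * (-1)^t * ∑ c ∈ range (n+1), (Nat.choose n c : ℚ) * DD c t := by
        rw [Finset.mul_sum]
        exact sum_congr rfl fun c _ => by ring
      rw [hs, DD_step n t, pow_succ]
      ring
    have e6 : ∑ c ∈ range (n+1), (Nat.choose n c : ℚ) *
              (∑ t ∈ range (N+1), (Nat.choose x t : ℚ) * (-1) ^ t * DD c t)
        = ((x:ℚ) + 1) ^ n := by
      have : ∀ c, (∑ t ∈ range (N+1), (Nat.choose x t : ℚ) * (-1) ^ t * DD c t) = (x:ℚ)^c :=
        fun c => (ih hx c).symm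
      calc ∑ c ∈ range (n+1), (Nat.choose n c : ℚ) *
              (∑ t ∈ range (N+1), (Nat.choose x t : ℚ) * (-1) ^ t * DD c t)
          = ∑ c ∈ range (n+1), (x:ℚ)^c * (Nat.choose n c : ℚ) := by
            refine sum_congr rfl fun c _ => ?_
            rw [this c]; ring
        _ = ((x:ℚ) + 1) ^ n := by
            have := add_pow (x : ℚ) 1 n
            simpa using this.symm
    have lhs : ((x:ℚ) + 1) ^ n
        = ∑ k ∈ range (N + 1), (Nat.choose (x+1) k : ℚ) * (-1) ^ k * DD n k := by
      rw [e1, e2]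
      have hihn := ih hx n
      calc ((x:ℚ) + 1) ^ n
          = (x:ℚ)^n + (- (x:ℚ)^n + ((x:ℚ)+1)^n) := by ring
        _ = (∑ t ∈ range N, (Nat.choose x (t+1) : ℚ) * (-1) ^ (t+1) * DD n (t+1) + DD n 0)
            + ∑ t ∈ range N, (Nat.choose x t : ℚ) * (-1) ^ (t+1) * DD n (t+1) := by
            rw [e3, e4, e5, e6, ← hihn]
        _ = _ := by ring
    push_cast
    push_cast at lhs
    rw [lhs]

lemma choose_bracket (j k : ℕ) :
    ((j:ℚ)+1) * (Nat.choose (j+2) (k+1) : ℚ)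
      = (j:ℚ) * (Nat.choose (j+1) (k+1) : ℚ) + ((k:ℚ)+2) * (Nat.choose (j+1) (k+1) : ℚ)
        + (k:ℚ) * (Nat.choose (j+1) k : ℚ) := by
  rcases le_or_gt k (j+1) with h | h
  · have hp : (Nat.choose (j+2) (k+1) : ℚ) = (Nat.choose (j+1) k : ℚ) + (Nat.choose (j+1) (k+1) : ℚ) := by
      rw [Nat.choose_succ_succ]; push_cast; ring
    have h2n := Nat.choose_succ_right_eq (j+1) k
    have h2 : (Nat.choose (j+1) (k+1) : ℚ) * ((k:ℚ)+1)
        = (Nat.choose (j+1) k : ℚ) * ((j:ℚ)+1-(k:ℚ)) := by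
      have hc := congrArg (fun x : ℕ => (x : ℚ)) h2n
      push_cast [Nat.cast_sub h] at hc
      convert hc using 2 <;> push_cast <;> ring
    rw [hp]
    nlinarith [h2]
  · have c1 : Nat.choose (j+1) (k+1) = 0 := Nat.choose_eq_zero_of_lt (by omega)
    have c2 : Nat.choose (j+1) k = 0 := Nat.choose_eq_zero_of_lt h
    have c3 : Nat.choose (j+2) (k+1) = 0 := Nat.choose_eq_zero_of_lt (by omega)
    rw [c1, c2, c3]
    simp

noncomputable def XX (m k : ℕ) : ℚ :=
  ∑ j ∈ range (m + 1), DD m j * (Nat.choose (j+1) k : ℚ)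

lemma XX_rec (m : ℕ) :
    ∀ k, XX (m+1) k
      = ∑ j ∈ range (m + 1), DD m j * ((j:ℚ) * (Nat.choose (j+1) k : ℚ) - ((j:ℚ)+1) * (Nat.choose (j+2) k : ℚ)) := by
  intro k
  have peel : XX (m+1) k = ∑ j ∈ range (m+1), DD (m+1) (j+1) * (Nat.choose (j+2) k : ℚ) := by
    rw [XX, Finset.sum_range_succ' (fun j => DD (m+1) j * (Nat.choose (j+1) k : ℚ)) (m+1)]
    rw [DD_zero_right' (m+1) (by omega)]
    simp
  have split : ∀ j, DD (m+1) (j+1) * (Nat.choose (j+2) k : ℚ)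
      = ((j:ℚ)+1) * DD m (j+1) * (Nat.choose (j+2) k : ℚ)
        - ((j:ℚ)+1) * DD m j * (Nat.choose (j+2) k : ℚ) := by
    intro j; rw [DD_succ_succ]; ring
  have s1 : ∑ j ∈ range (m+1), ((j:ℚ)+1) * DD m (j+1) * (Nat.choose (j+2) k : ℚ)
      = ∑ s ∈ range (m+1), (s:ℚ) * DD m s * (Nat.choose (s+1) k : ℚ) := by
    have h0 : ∑ s ∈ range (m+2), (s:ℚ) * DD m s * (Nat.choose (s+1) k : ℚ)
        = ∑ j ∈ range (m+1), ((j:ℚ)+1) * DD m (j+1) * (Nat.choose (j+2) k : ℚ) := by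
      rw [Finset.sum_range_succ' (fun s => (s:ℚ) * DD m s * (Nat.choose (s+1) k : ℚ)) (m+1)]
      push_cast
      simp
    have h1 : ∑ s ∈ range (m+2), (s:ℚ) * DD m s * (Nat.choose (s+1) k : ℚ)
        = ∑ s ∈ range (m+1), (s:ℚ) * DD m s * (Nat.choose (s+1) k : ℚ) := by
      rw [Finset.sum_range_succ, DD_vanish m (m+1) (by omega)]
      ring
    rw [← h0, h1]
  calc XX (m+1) k
      = ∑ j ∈ range (m+1), (((j:ℚ)+1) * DD m (j+1) * (Nat.choose (j+2) k : ℚ)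
          - ((j:ℚ)+1) * DD m j * (Nat.choose (j+2) k : ℚ)) := by
        rw [peel]; exact sum_congr rfl fun j _ => split j
    _ = ∑ j ∈ range (m+1), ((j:ℚ)+1) * DD m (j+1) * (Nat.choose (j+2) k : ℚ)
        - ∑ j ∈ range (m+1), ((j:ℚ)+1) * DD m j * (Nat.choose (j+2) k : ℚ) := by
        rw [Finset.sum_sub_distrib]
    _ = _ := by
        rw [s1, ← Finset.sum_sub_distrib]
        exact sum_congr rfl fun j _ => by ring

lemma X_eq : ∀ m k : ℕ, XX m k
    = (-1:ℚ)^(m+k) * (DD (m+1) k / (k:ℚ) - DD (m+1) (k+1) / ((k:ℚ)+1)) := by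
  intro m
  induction m with
  | zero =>
    intro k
    have hX : XX 0 k = (Nat.choose 1 k : ℚ) := by
      rw [XX, Finset.sum_range_one]
      have : DD 0 0 = 1 := by rw [DD_zero_right]; simp
      rw [this]; ring
    match k with
    | 0 =>
      rw [hX]
      rw [DD_zero_right' 1 (by omega), DD_one_right 1 (by omega)]
      norm_num
    | 1 =>
      rw [hX, DD_one_right 1 (by omega), DD_vanish 1 2 (by omega)]
      norm_num
    | (k+2) =>
      rw [hX, DD_vanish 1 (k+2) (by omega), DD_vanish 1 (k+3) (by omega)]
      rw [Nat.choose_eq_zero_of_lt (by omega)]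
      simp
  | succ m ih =>
    intro k
    match k with
    | 0 =>
      have h1 : XX (m+1) 0 = - XX m 0 := by
        rw [XX_rec m 0, XX, ← Finset.sum_neg_distrib]
        refine sum_congr rfl fun j _ => ?_
        rw [Nat.choose_zero_right, Nat.choose_zero_right]
        push_cast
        ring
      rw [h1, ih 0]
      rw [DD_zero_right' (m+1) (by omega), DD_zero_right' (m+2) (by omega),
        DD_one_right (m+1) (by omega), DD_one_right (m+2) (by omega)]
      push_cast
      ring
    | (k+1) =>
      have h1 : XX (m+1) (k+1) = -((k:ℚ)+2) * XX m (k+1) - (k:ℚ) * XX m k := by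
        rw [XX_rec m (k+1), XX, XX, Finset.mul_sum, Finset.mul_sum, ← Finset.sum_sub_distrib]
        refine sum_congr rfl fun j _ => ?_
        have hb := choose_bracket j k
        linear_combination (-(DD m j)) * hb
      have hd1 : DD (m+2) (k+1) = ((k:ℚ)+1) * (DD (m+1) (k+1) - DD (m+1) k) := DD_succ_succ (m+1) k
      have hd2 : DD (m+2) (k+2) = ((k:ℚ)+2) * (DD (m+1) (k+2) - DD (m+1) (k+1)) := by
        have := DD_succ_succ (m+1) (k+1)
        push_cast at this ⊢
        linarith [this]
      have hpow : ((-1:ℚ))^(m+1+(k+1)) = (-1)^(m+k) := by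
        have : m+1+(k+1) = (m+k)+2 := by omega
        rw [this, pow_add]
        norm_num
      have hpow2 : ((-1:ℚ))^(m+(k+1)) = -(-1)^(m+k) := by
        have : m+(k+1) = (m+k)+1 := by omega
        rw [this, pow_succ]
        ring
      rw [h1, ih (k+1), ih k, hpow, hpow2, hd1, hd2]
      rcases Nat.eq_zero_or_pos k with rfl | hkpos
      · rw [DD_zero_right' (m+1) (by omega)]
        push_cast
        norm_num
        ring
      · have hkq : (k:ℚ) ≠ 0 := Nat.cast_ne_zero.mpr (by omega)
        have hk1 : ((k:ℚ)+1) ≠ 0 := by positivity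
        have hk2 : ((k:ℚ)+2) ≠ 0 := by positivity
        push_cast
        field_simp
        ring

lemma sgn_sq (a : ℕ) : (-1:ℚ)^a * (-1)^a = 1 := by
  rw [← pow_add]; exact Even.neg_one_pow ⟨a, rfl⟩

lemma B_eq (m n : ℕ) :
    polyBernoulli m n
      = ∑ t ∈ range (m+n+2), DD (m+1) (t+1) * DD (n+1) (t+1) / (((t:ℚ)+1)*((t:ℚ)+1)) := by
  set K := m + n + 1 with hK
  have step1 : polyBernoulli m n
      = (-1:ℚ)^m * ∑ j ∈ range (m+1), DD m j *
          (∑ k ∈ range (K+1), (Nat.choose (j+1) k : ℚ) * (-1)^k * DD n k) := by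
    rw [polyB_eq]
    congr 1
    refine sum_congr rfl fun j hj => ?_
    congr 1
    have hjK : j + 1 ≤ K := by
      have := mem_range.mp hj; omega
    have := pow_expand K (j+1) hjK n
    push_cast at this
    exact this
  have step2 : polyBernoulli m n
      = (-1:ℚ)^m * ∑ k ∈ range (K+1), (-1:ℚ)^k * DD n k * XX m k := by
    rw [step1]
    congr 1
    calc ∑ j ∈ range (m+1), DD m j *
          (∑ k ∈ range (K+1), (Nat.choose (j+1) k : ℚ) * (-1)^k * DD n k)
        = ∑ j ∈ range (m+1), ∑ k ∈ range (K+1),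
            DD m j * ((Nat.choose (j+1) k : ℚ) * (-1)^k * DD n k) := by
          exact sum_congr rfl fun j _ => Finset.mul_sum _ _ _
      _ = ∑ k ∈ range (K+1), ∑ j ∈ range (m+1),
            DD m j * ((Nat.choose (j+1) k : ℚ) * (-1)^k * DD n k) := Finset.sum_comm
      _ = ∑ k ∈ range (K+1), (-1:ℚ)^k * DD n k * XX m k := by
          refine sum_congr rfl fun k _ => ?_
          rw [XX, Finset.mul_sum]
          refine sum_congr rfl fun j _ => by ring
  have step3 : polyBernoulli m n
      = ∑ k ∈ range (K+1), DD n k *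
          (DD (m+1) k / (k:ℚ) - DD (m+1) (k+1) / ((k:ℚ)+1)) := by
    rw [step2, Finset.mul_sum]
    refine sum_congr rfl fun k _ => ?_
    rw [X_eq m k, pow_add]
    have h1 := sgn_sq m
    have h2 := sgn_sq k
    calc (-1:ℚ)^m * ((-1:ℚ)^k * DD n k *
            ((-1:ℚ)^m * (-1:ℚ)^k * (DD (m+1) k / (k:ℚ) - DD (m+1) (k+1) / ((k:ℚ)+1))))
        = ((-1:ℚ)^m * (-1:ℚ)^m) * ((-1:ℚ)^k * (-1:ℚ)^k) *
            (DD n k * (DD (m+1) k / (k:ℚ) - DD (m+1) (k+1) / ((k:ℚ)+1))) := by ring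
      _ = _ := by rw [h1, h2]; ring
  have split : polyBernoulli m n
      = ∑ k ∈ range (K+1), DD n k * DD (m+1) k / (k:ℚ)
        - ∑ k ∈ range (K+1), DD n k * DD (m+1) (k+1) / ((k:ℚ)+1) := by
    rw [step3, ← Finset.sum_sub_distrib]
    refine sum_congr rfl fun k _ => ?_
    ring
  have reindex : ∑ k ∈ range (K+1), DD n k * DD (m+1) k / (k:ℚ)
      = ∑ t ∈ range (K+1), DD n (t+1) * DD (m+1) (t+1) / ((t:ℚ)+1) := by
    rw [Finset.sum_range_succ' (fun k => DD n k * DD (m+1) k / (k:ℚ)) K]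
    have h0 : DD n 0 * DD (m+1) 0 / ((0:ℕ):ℚ) = 0 := by
      rw [DD_zero_right' (m+1) (by omega)]; simp
    rw [h0, add_zero]
    rw [Finset.sum_range_succ (fun t => DD n (t+1) * DD (m+1) (t+1) / ((t:ℚ)+1)) K]
    have hv : DD n (K+1) = 0 := DD_vanish n (K+1) (by omega)
    rw [hv]
    push_cast
    simp
  rw [split, reindex, ← Finset.sum_sub_distrib]
  refine sum_congr rfl fun t _ => ?_
  have hd : DD (n+1) (t+1) = ((t:ℚ)+1) * (DD n (t+1) - DD n t) := DD_succ_succ n t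
  have ht1 : ((t:ℚ)+1) ≠ 0 := by positivity
  rw [hd]
  field_simp


theorem polyBernoulli_symm (m n : ℕ) : polyBernoulli m n = polyBernoulli n m := by
  rw [B_eq m n, B_eq n m, Nat.add_comm n m]
  exact sum_congr rfl fun t _ => by ring
end

section
/- A 0/1 matrix is lonesum (contains no 2×2 submatrix equal to [[1,0],[0,1]] or [[0,1],[1,0]]) if and only if it is uniquely determined among 0/1 matrices of the same dimensions by its row sums and column sums. -/
open Finset

/-- A 0/1 matrix is lonesum if no 2×2 submatrix equals [[1,0],[0,1]] or [[0,1],[1,0]]. -/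
def IsLonesum {m n : ℕ} (A : Matrix (Fin m) (Fin n) Bool) : Prop :=
  ∀ i k : Fin m, ∀ j l : Fin n, i < k → j < l →
    ¬(A i j = true ∧ A i l = false ∧ A k j = false ∧ A k l = true) ∧
    ¬(A i j = false ∧ A i l = true ∧ A k j = true ∧ A k l = false)

/-- Row sums of a 0/1 matrix (number of ones in each row). -/
def rowSums {m n : ℕ} (A : Matrix (Fin m) (Fin n) Bool) (i : Fin m) : ℕ :=
  ∑ j, if A i j then 1 else 0

/-- Column sums of a 0/1 matrix (number of ones in each column). -/
def colSums {m n : ℕ} (A : Matrix (Fin m) (Fin n) Bool) (j : Fin n) : ℕ :=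
  ∑ i, if A i j then 1 else 0

lemma sum_two_flip {n : ℕ} (F G : Fin n → ℕ) (j l : Fin n) (hjl : j ≠ l)
    (h : ∀ x, x ≠ j → x ≠ l → F x = G x) (h2 : F j + F l = G j + G l) :
    ∑ x, F x = ∑ x, G x := by
  have hlmem : l ∈ (univ : Finset (Fin n)).erase j := by
    simp [Finset.mem_erase, Ne.symm hjl]
  have key : ∀ H : Fin n → ℕ,
      ∑ x, H x = H j + (H l + ∑ x ∈ ((univ : Finset (Fin n)).erase j).erase l, H x) := by
    intro H
    rw [Finset.add_sum_erase _ H hlmem, Finset.add_sum_erase _ H (mem_univ j)]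
  rw [key F, key G]
  have hrest : ∑ x ∈ ((univ : Finset (Fin n)).erase j).erase l, F x
      = ∑ x ∈ ((univ : Finset (Fin n)).erase j).erase l, G x := by
    apply Finset.sum_congr rfl
    intro x hx
    simp only [Finset.mem_erase] at hx
    exact h x hx.2.1 hx.1
  omega

lemma lonesum_mono {m n : ℕ} {A : Matrix (Fin m) (Fin n) Bool} (hA : IsLonesum A)
    {i i' : Fin m} {j : Fin n} (hr : rowSums A i ≤ rowSums A i') (hij : A i j = true) :
    A i' j = true := by
  by_contra hF
  rw [Bool.not_eq_true] at hF
  have hl : ∃ l, A i' l = true ∧ A i l = false := by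
    by_contra hcon
    push_neg at hcon
    have hlt : rowSums A i' < rowSums A i := by
      apply Finset.sum_lt_sum
      · intro x _
        by_cases hx : A i' x = true
        · have hx2 : A i x = true := by
            have := hcon x hx
            simpa using this
          simp [hx, hx2]
        · rw [Bool.not_eq_true] at hx
          simp [hx]
      · exact ⟨j, mem_univ j, by simp [hF, hij]⟩
    omega
  obtain ⟨l, hl1, hl2⟩ := hl
  have hii : i ≠ i' := by
    intro h; rw [h, hF] at hij; exact Bool.false_ne_true hij
  have hjl : j ≠ l := by
    intro h; rw [h, hl2] at hij; exact Bool.false_ne_true hij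
  rcases lt_or_gt_of_ne hii with h1 | h1 <;> rcases lt_or_gt_of_ne hjl with h2 | h2
  · exact (hA i i' j l h1 h2).1 ⟨hij, hl2, hF, hl1⟩
  · exact (hA i i' l j h1 h2).2 ⟨hl2, hij, hl1, hF⟩
  · exact (hA i' i j l h1 h2).2 ⟨hF, hl1, hij, hl2⟩
  · exact (hA i' i l j h1 h2).1 ⟨hl1, hF, hl2, hij⟩

lemma flip_contra {m n : ℕ} (A : Matrix (Fin m) (Fin n) Bool)
    (h : ∀ B : Matrix (Fin m) (Fin n) Bool,
        rowSums B = rowSums A → colSums B = colSums A → B = A)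
    (i k : Fin m) (j l : Fin n) (hik : i ≠ k) (hjl : j ≠ l)
    (hd1 : A i j ≠ A i l) (hd2 : A i j ≠ A k j) (hd3 : A i j = A k l) : False := by
  classical
  set B : Matrix (Fin m) (Fin n) Bool :=
    fun x y => if (x = i ∨ x = k) ∧ (y = j ∨ y = l) then !(A x y) else A x y with hB
  have hnej : ∀ x, (x = i ∨ x = k) → A x j ≠ A x l := by
    rintro x (rfl | rfl)
    · exact hd1
    · intro hh
      apply hd2
      rw [hh, ← hd3]
  have hnei : ∀ y, (y = j ∨ y = l) → A i y ≠ A k y := by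
    rintro y (rfl | rfl)
    · exact hd2
    · intro hh
      apply hd1
      rw [hh, ← hd3]
  have hrow : rowSums B = rowSums A := by
    funext x
    unfold rowSums
    by_cases hx : x = i ∨ x = k
    · apply sum_two_flip _ _ j l hjl
      · intro y hy1 hy2
        have : B x y = A x y := by
          simp only [hB]
          rw [if_neg]
          rintro ⟨-, (rfl | rfl)⟩ <;> simp_all
        rw [this]
      · have hBj : B x j = !(A x j) := by simp [hB, hx]
        have hBl : B x l = !(A x l) := by simp [hB, hx]
        rw [hBj, hBl]
        have := hnej x hx
        cases h1 : A x j <;> cases h2 : A x l <;> simp_all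
    · have : ∀ y, B x y = A x y := by
        intro y
        simp only [hB]
        rw [if_neg]
        rintro ⟨h', -⟩
        exact hx h'
      simp only [this]
  have hcol : colSums B = colSums A := by
    funext y
    unfold colSums
    by_cases hy : y = j ∨ y = l
    · apply sum_two_flip _ _ i k hik
      · intro x hx1 hx2
        have : B x y = A x y := by
          simp only [hB]
          rw [if_neg]
          rintro ⟨(rfl | rfl), -⟩ <;> simp_all
        rw [this]
      · have hBi : B i y = !(A i y) := by simp [hB, hy]
        have hBk : B k y = !(A k y) := by simp [hB, hy]
        rw [hBi, hBk]
        have := hnei y hy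
        cases h1 : A i y <;> cases h2 : A k y <;> simp_all
    · have : ∀ x, B x y = A x y := by
        intro x
        simp only [hB]
        rw [if_neg]
        rintro ⟨-, h'⟩
        exact hy h'
      simp only [this]
  have hBA := h B hrow hcol
  have h1 : B i j = A i j := by rw [hBA]
  have h2 : B i j = !(A i j) := by simp [hB]
  rw [h2] at h1
  exact (Bool.not_ne_self (A i j)) h1

/-- A 0/1 matrix is lonesum iff it is uniquely determined among 0/1 matrices of the
same dimensions by its row sums and column sums. -/
theorem isLonesum_iff_unique_by_margins {m n : ℕ} (A : Matrix (Fin m) (Fin n) Bool) :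
    IsLonesum A ↔
      ∀ B : Matrix (Fin m) (Fin n) Bool,
        rowSums B = rowSums A → colSums B = colSums A → B = A := by
  classical
  constructor
  · intro hA B hr hc
    -- key step: every 1 of A is a 1 of B
    have hkey : ∀ i j, A i j = true → B i j = true := by
      intro i j hAij
      set S : Finset (Fin m) := univ.filter (fun i' => rowSums A i ≤ rowSums A i') with hS
      set k := S.card with hk
      have hiS : i ∈ S := by simp [hS]
      have hSA : ∀ i' ∈ S, A i' j = true := by
        intro i' hi'
        exact lonesum_mono hA (by simpa [hS] using hi') hAij
      -- generic rewriting of ∑_{i'∈S} rowSums of a matrix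
      have hrw : ∀ C : Matrix (Fin m) (Fin n) Bool,
          ∑ i' ∈ S, rowSums C i' = ∑ j', (S.filter (fun i' => C i' j' = true)).card := by
        intro C
        unfold rowSums
        rw [Finset.sum_comm]
        apply Finset.sum_congr rfl
        intro j' _
        rw [Finset.sum_boole]
        simp
      -- colSums as cards
      have hcardcol : ∀ (C : Matrix (Fin m) (Fin n) Bool) j',
          colSums C j' = (univ.filter (fun i' => C i' j' = true)).card := by
        intro C j'
        unfold colSums
        rw [Finset.sum_boole]
        simp
      have hcjk : ∀ j', (∀ i' ∈ S, A i' j' = true) → k ≤ colSums A j' := by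
        intro j' hall
        rw [hcardcol]
        apply Finset.card_le_card
        intro x hx
        simp only [Finset.mem_filter, Finset.mem_univ, true_and]
        exact hall x hx
      have hAs : ∑ i' ∈ S, rowSums A i' = ∑ j', min (colSums A j') k := by
        rw [hrw]
        apply Finset.sum_congr rfl
        intro j' _
        by_cases hex : ∀ i0, A i0 j' = true → i0 ∈ S
        · have h1 : (S.filter (fun i' => A i' j' = true)) = univ.filter (fun i' => A i' j' = true) := by
            ext x
            simp only [Finset.mem_filter, Finset.mem_univ, true_and]
            exact ⟨fun hx => hx.2, fun hx => ⟨hex x hx, hx⟩⟩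
          rw [h1, ← hcardcol]
          symm
          apply min_eq_left
          rw [hcardcol, ← h1]
          exact (Finset.card_le_card (Finset.filter_subset _ _))
        · push_neg at hex
          obtain ⟨i0, hi0, hi0S⟩ := hex
          have hlt : rowSums A i0 < rowSums A i := by
            by_contra hge
            exact hi0S (by simp [hS]; omega)
          have hall : ∀ i' ∈ S, A i' j' = true := by
            intro i' hi'
            have hle : rowSums A i0 ≤ rowSums A i' := by
              have := (Finset.mem_filter.1 hi').2
              omega
            exact lonesum_mono hA hle hi0
          rw [Finset.filter_true_of_mem hall]
          symm
          exact min_eq_right (hcjk j' hall)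
      have hle : ∀ j', (S.filter (fun i' => B i' j' = true)).card ≤ min (colSums A j') k := by
        intro j'
        refine le_min ?_ ?_
        · rw [← hc, hcardcol]
          apply Finset.card_le_card
          intro x hx
          simp only [Finset.mem_filter, Finset.mem_univ, true_and] at hx ⊢
          exact hx.2
        · exact Finset.card_filter_le _ _
      have hsum : ∑ j', (S.filter (fun i' => B i' j' = true)).card = ∑ j', min (colSums A j') k := by
        rw [← hrw, ← hAs]
        apply Finset.sum_congr rfl
        intro i' _
        rw [hr]
      have heq := (Finset.sum_eq_sum_iff_of_le (fun j' _ => hle j')).1 hsum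
      have heqj : (S.filter (fun i' => B i' j = true)).card = k := by
        rw [heq j (mem_univ j)]
        exact min_eq_right (hcjk j hSA)
      have hfS : S.filter (fun i' => B i' j = true) = S := by
        apply Finset.eq_of_subset_of_card_le (Finset.filter_subset _ _)
        rw [heqj]
      have : i ∈ S.filter (fun i' => B i' j = true) := hfS.symm ▸ hiS
      exact (Finset.mem_filter.1 this).2
    -- now conclude B = A
    funext i j
    have hri : rowSums A i = rowSums B i := (congrFun hr i).symm
    have hterm := (Finset.sum_eq_sum_iff_of_le
      (f := fun j' => if A i j' then (1:ℕ) else 0)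
      (g := fun j' => if B i j' then (1:ℕ) else 0)
      (fun j' _ => by
        by_cases h' : A i j' = true
        · have := hkey i j' h'
          simp [h', this]
        · rw [Bool.not_eq_true] at h'
          simp [h'])).1 hri
    have := hterm j (mem_univ j)
    cases hAij : A i j <;> cases hBij : B i j <;> simp_all
  · intro h
    intro i k j l hik hjl
    constructor
    · rintro ⟨h1, h2, h3, h4⟩
      apply flip_contra A h i k j l (ne_of_lt hik) (ne_of_lt hjl)
      · rw [h1, h2]; simp
      · rw [h1, h3]; simp
      · rw [h1, h4]
    · rintro ⟨h1, h2, h3, h4⟩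
      apply flip_contra A h i k j l (ne_of_lt hik) (ne_of_lt hjl)
      · rw [h1, h2]; simp
      · rw [h1, h3]; simp
      · rw [h1, h4]
end

section
/- For every m×n lonesum 0/1 matrix A, there exist permutations σ of the rows and τ of the columns and a partition λ = (λ_1 ≥ λ_2 ≥ ... ≥ λ_m ≥ 0) with λ_i ≤ n, such that the permuted matrix has a 1 in position (i,j) if and only if j ≤ λ_i. -/
open Finset

/-- Every lonesum matrix can be brought, by permuting rows and columns, to the
shape of a partition `λ = (λ_1 ≥ ⋯ ≥ λ_m ≥ 0)` with `λ_i ≤ n`: after permutation,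
there is a 1 in position (i,j) iff `j ≤ λ_i` (1-indexed), i.e. `j.val < λ i`. -/
theorem lonesum_tableau_form {m n : ℕ} (A : Matrix (Fin m) (Fin n) Bool)
    (hA : IsLonesum A) :
    ∃ (σ : Equiv.Perm (Fin m)) (τ : Equiv.Perm (Fin n)) (lam : Fin m → ℕ),
      (∀ i i' : Fin m, i ≤ i' → lam i' ≤ lam i) ∧
      (∀ i, lam i ≤ n) ∧
      (∀ i j, A (σ i) (τ j) = true ↔ (j : ℕ) < lam i) := by
  classical
  set rs : Fin m → ℕ := fun i => (univ.filter fun j => A i j = true).card with hrs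
  set cs : Fin n → ℕ := fun j => (univ.filter fun i => A i j = true).card with hcs
  have colcmp : ∀ j l : Fin n, (∀ i, A i j = true → A i l = true) ∨
      (∀ i, A i l = true → A i j = true) := by
    intro j l
    by_contra h
    push_neg at h
    obtain ⟨⟨i, hij, hil⟩, ⟨k, hkl, hkj⟩⟩ := h
    replace hil : A i l = false := Bool.eq_false_iff.mpr hil
    replace hkj : A k j = false := Bool.eq_false_iff.mpr hkj
    have hik : i ≠ k := by rintro rfl; rw [hij] at hkj; exact Bool.noConfusion hkj
    have hjl : j ≠ l := by rintro rfl; rw [hij] at hil; exact Bool.noConfusion hil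
    rcases lt_or_gt_of_ne hjl with hjl | hjl
    · rcases lt_or_gt_of_ne hik with hik | hik
      · exact (hA i k j l hik hjl).1 ⟨hij, hil, hkj, hkl⟩
      · exact (hA k i j l hik hjl).2 ⟨hkj, hkl, hij, hil⟩
    · rcases lt_or_gt_of_ne hik with hik | hik
      · exact (hA i k l j hik hjl).2 ⟨hil, hij, hkl, hkj⟩
      · exact (hA k i l j hik hjl).1 ⟨hkl, hkj, hil, hij⟩
  have coldom : ∀ j l : Fin n, cs l ≤ cs j → ∀ i, A i l = true → A i j = true := by
    intro j l hle i hil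
    rcases colcmp j l with h | h
    · have hsub : (univ.filter fun i => A i j = true) ⊆ (univ.filter fun i => A i l = true) := by
        intro x hx
        simp only [mem_filter, mem_univ, true_and] at hx ⊢
        exact h x hx
      have heq := Finset.eq_of_subset_of_card_le hsub hle
      have hmem : i ∈ (univ.filter fun i => A i j = true) := by
        rw [heq]; simpa using hil
      simpa using hmem
    · exact h i hil
  let σ : Equiv.Perm (Fin m) := (Fin.revPerm).trans (Tuple.sort rs)
  let τ : Equiv.Perm (Fin n) := (Fin.revPerm).trans (Tuple.sort cs)
  refine ⟨σ, τ, fun i => rs (σ i), ?_, ?_, ?_⟩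
  · intro i i' h
    exact Tuple.monotone_sort rs (Fin.rev_le_rev.mpr h)
  · intro i
    exact (Finset.card_filter_le _ _).trans (by simp)
  · intro i j
    set r := σ i with hr
    show A r (τ j) = true ↔ (j : ℕ) < rs r
    have csanti : ∀ j j' : Fin n, j ≤ j' → cs (τ j') ≤ cs (τ j) := by
      intro j j' h
      exact Tuple.monotone_sort cs (Fin.rev_le_rev.mpr h)
    have hpre : ∀ j j' : Fin n, j' ≤ j → A r (τ j) = true → A r (τ j') = true := by
      intro j j' h hj
      exact coldom (τ j') (τ j) (csanti j' j h) r hj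
    have hcard : (univ.filter fun j => A r (τ j) = true).card = rs r := by
      have heq : (univ.filter fun j => A r (τ j) = true)
          = (univ.filter fun j => A r j = true).map τ.symm.toEmbedding := by
        ext x
        simp [Finset.mem_map_equiv]
      rw [heq, Finset.card_map]
    constructor
    · intro h
      have hsub : Finset.Iic j ⊆ univ.filter fun j' => A r (τ j') = true := by
        intro x hx
        simp only [mem_Iic] at hx
        simp only [mem_filter, mem_univ, true_and]
        exact hpre j x hx h
      have hle := Finset.card_le_card hsub
      rw [hcard] at hle
      rw [Fin.card_Iic] at hle
      omega
    · intro h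
      by_contra hj
      replace hj : A r (τ j) = false := Bool.eq_false_iff.mpr hj
      have hsub : (univ.filter fun j' => A r (τ j') = true) ⊆ Finset.Iio j := by
        intro x hx
        simp only [mem_filter, mem_univ, true_and] at hx
        simp only [mem_Iio]
        by_contra hx2
        push_neg at hx2
        have hc := hpre x j hx2 hx
        rw [hc] at hj
        exact Bool.noConfusion hj
      have hle := Finset.card_le_card hsub
      rw [hcard, Fin.card_Iio] at hle
      omega
end

section
/- Let m,n ≥ 2, let N and P partition the set of symbols {p_{ij} : i∈[m]∪{+}, j∈[n]∪{+}} \ {p_{++}}, and let M(N,P) be the set of real m×n matrices p with Σ p_{ij} = 1, p_{ij} < 0 for p_{ij}∈N, p_{ij} > 0 for p_{ij}∈P (with p_{i+} = Σ_j p_{ij}, p_{+j} = Σ_i p_{ij}). If there exist indices i≠k in [m] and j≠l in [n] with p_{ij}, p_{kl} ∈ N and p_{il}, p_{kj} ∈ P, then M(N,P) is empty or unbounded. -/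
/-- The open region `M(N,P)` of m x n real matrices with total sum 1, where the
entries indexed by `Ne` (and the row sums indexed by `rowN`, column sums indexed
by `colN`) are constrained to be negative, and all remaining entries, row sums
and column sums are constrained to be positive. -/
def MRegion (m n : ℕ) (Ne : Set (Fin m × Fin n)) (rowN : Set (Fin m)) (colN : Set (Fin n)) :
    Set (Fin m → Fin n → ℝ) :=
  {p | (∑ i, ∑ j, p i j) = 1 ∧
    (∀ i j, ((i, j) ∈ Ne → p i j < 0) ∧ ((i, j) ∉ Ne → 0 < p i j)) ∧
    (∀ i, (i ∈ rowN → (∑ j, p i j) < 0) ∧ (i ∉ rowN → 0 < ∑ j, p i j)) ∧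
    (∀ j, (j ∈ colN → (∑ i, p i j) < 0) ∧ (j ∉ colN → 0 < ∑ i, p i j))}

/-- If `N` contains entries `(i,j)` and `(k,l)` while `(i,l)` and `(k,j)` belong
to `P` (for `i ≠ k`, `j ≠ l`), then `M(N,P)` is empty or unbounded. -/
theorem mRegion_empty_or_unbounded {m n : ℕ} (hm : 2 ≤ m) (hn : 2 ≤ n)
    (Ne : Set (Fin m × Fin n)) (rowN : Set (Fin m)) (colN : Set (Fin n))
    (i k : Fin m) (j l : Fin n) (hik : i ≠ k) (hjl : j ≠ l)
    (h1 : (i, j) ∈ Ne) (h2 : (k, l) ∈ Ne) (h3 : (i, l) ∉ Ne) (h4 : (k, j) ∉ Ne) :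
    MRegion m n Ne rowN colN = ∅ ∨
      ¬ Bornology.IsBounded (MRegion m n Ne rowN colN) := by
  by_cases hne : MRegion m n Ne rowN colN = ∅
  · exact Or.inl hne
  right
  obtain ⟨p, hp⟩ := Set.nonempty_iff_ne_empty.mpr hne
  intro hb
  obtain ⟨C, hC⟩ := Metric.isBounded_iff.mp hb
  set t : ℝ := max C 0 + 1 with htdef
  have ht : 0 < t := by positivity
  set q : Fin m → Fin n → ℝ := fun a b => p a b +
      (if a = i then (if b = l then t else 0) - (if b = j then t else 0) else 0) +
      (if a = k then (if b = j then t else 0) - (if b = l then t else 0) else 0) with hqdef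
  have hpmem := hp
  obtain ⟨hsum, hent, hrow, hcol⟩ := hp
  have hrowsum : ∀ a, (∑ b, q a b) = ∑ b, p a b := by
    intro a
    by_cases hai : a = i <;> by_cases hak : a = k <;>
      simp [hqdef, hai, hak, Finset.sum_add_distrib, Finset.sum_sub_distrib,
        Finset.sum_ite_eq']
  have hcolsum : ∀ b, (∑ a, q a b) = ∑ a, p a b := by
    intro b
    simp only [hqdef]
    rw [Finset.sum_add_distrib, Finset.sum_add_distrib]
    simp [Finset.sum_ite_eq']
    ring
  have hq : q ∈ MRegion m n Ne rowN colN := by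
    refine ⟨?_, ?_, ?_, ?_⟩
    · rw [Finset.sum_congr rfl fun a _ => hrowsum a]; exact hsum
    · intro a b
      have h := hent a b
      refine ⟨fun hx => ?_, fun hx => ?_⟩
      · have hv := h.1 hx
        simp only [hqdef]
        split_ifs <;> subst_vars <;> first | linarith | simp_all
      · have hv := h.2 hx
        simp only [hqdef]
        split_ifs <;> subst_vars <;> first | linarith | simp_all
    · intro a
      rw [hrowsum a]; exact hrow a
    · intro b
      rw [hcolsum b]; exact hcol b
  have hdist : dist (q i l) (p i l) ≤ dist q p := by
    calc dist (q i l) (p i l) ≤ dist (q i) (p i) := dist_le_pi_dist _ _ _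
      _ ≤ dist q p := dist_le_pi_dist _ _ _
  have hqil : q i l = p i l + t := by
    simp [hqdef, hik, hjl, hik.symm, hjl.symm]
  rw [hqil, Real.dist_eq] at hdist
  have hle : dist q p ≤ C := hC hq hpmem
  have habs : |p i l + t - p i l| = t := by
    rw [show p i l + t - p i l = t by ring, abs_of_pos ht]
  rw [habs] at hdist
  have hCt : C < t := lt_of_le_of_lt (le_max_left C 0) (by rw [htdef]; linarith)
  linarith
end

section
/- With notation as before, if M(N,P) is nonempty and bounded then p_{i+} ∈ P for all i ∈ [m] and p_{+j} ∈ P for all j ∈ [n]; that is, all row-sum and column-sum constraints must be positivity constraints. -/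
/-! If `p ∈ M(N,P)` and a nonzero `e` satisfies the sign constraints weakly with `∑ e ≤ 0`, then
`p + t • ((-∑ e) • p + e)` lies in `M(N,P)` for every `t ≥ 0`, so `M(N,P)` is unbounded. A
negative row sum always yields such an `e`: `-E_ij` if a negative entry `(i, j)` of a negative row
lies in a negative column; otherwise `E_i'j - E_ij` if the column `j` of a negative entry of a
negative row `i` has a positive entry in a positive row `i'`; otherwise `p` restricted to the
negative rows and the columns meeting `N` there. Columns follow by transposition. -/

open Finset Bornology

def WeakSign (neg : Prop) (x : ℝ) : Prop := (neg → x ≤ 0) ∧ (¬neg → 0 ≤ x)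

lemma WeakSign.zero (neg : Prop) : WeakSign neg 0 := ⟨fun _ => le_rfl, fun _ => le_rfl⟩

lemma WeakSign.add {neg : Prop} {x y : ℝ} (hx : WeakSign neg x) (hy : WeakSign neg y) :
    WeakSign neg (x + y) :=
  ⟨fun h => add_nonpos (hx.1 h) (hy.1 h), fun h => add_nonneg (hx.2 h) (hy.2 h)⟩

lemma WeakSign.of_strict {neg : Prop} {x : ℝ} (h : (neg → x < 0) ∧ (¬neg → 0 < x)) :
    WeakSign neg x :=
  ⟨fun hn => (h.1 hn).le, fun hn => (h.2 hn).le⟩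

lemma weakSign_single {ι : Type*} [DecidableEq ι] {neg : ι → Prop} {i : ι} {x : ℝ}
    (h : WeakSign (neg i) x) (a : ι) : WeakSign (neg a) ((Pi.single i x : ι → ℝ) a) := by
  by_cases ha : a = i
  · subst ha
    simpa using h
  · simpa [ha] using WeakSign.zero _

lemma strictSign_mul_add_mul {neg : Prop} {x y a b : ℝ} (hx : (neg → x < 0) ∧ (¬neg → 0 < x))
    (hy : WeakSign neg y) (ha : 0 < a) (hb : 0 ≤ b) :
    (neg → a * x + b * y < 0) ∧ (¬neg → 0 < a * x + b * y) :=
  ⟨fun h => add_neg_of_neg_of_nonpos (mul_neg_of_pos_of_neg ha (hx.1 h))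
      (mul_nonpos_of_nonneg_of_nonpos hb (hy.1 h)),
    fun h => add_pos_of_pos_of_nonneg (mul_pos ha (hx.2 h)) (mul_nonneg hb (hy.2 h))⟩

def MCone (m n : ℕ) (Ne : Set (Fin m × Fin n)) (rowN : Set (Fin m)) (colN : Set (Fin n)) :
    Set (Fin m → Fin n → ℝ) :=
  {d | (∀ i j, WeakSign ((i, j) ∈ Ne) (d i j)) ∧ (∀ i, WeakSign (i ∈ rowN) (∑ j, d i j)) ∧
    ∀ j, WeakSign (j ∈ colN) (∑ i, d i j)}

section

variable {m n : ℕ} {Ne : Set (Fin m × Fin n)} {rowN : Set (Fin m)} {colN : Set (Fin n)}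

lemma smul_add_smul_mem_MRegion {p e : Fin m → Fin n → ℝ} (hp : p ∈ MRegion m n Ne rowN colN)
    (he : e ∈ MCone m n Ne rowN colN) {a b : ℝ} (ha : 0 < a) (hb : 0 ≤ b)
    (hsum : a + b * ∑ i, ∑ j, e i j = 1) : a • p + b • e ∈ MRegion m n Ne rowN colN := by
  obtain ⟨hp_sum, hp_entry, hp_row, hp_col⟩ := hp
  obtain ⟨he_entry, he_row, he_col⟩ := he
  have row_sum (i : Fin m) : ∑ j, (a • p + b • e) i j = a * ∑ j, p i j + b * ∑ j, e i j := by
    simp [sum_add_distrib, mul_sum]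
  have col_sum (j : Fin n) : ∑ i, (a • p + b • e) i j = a * ∑ i, p i j + b * ∑ i, e i j := by
    simp [sum_add_distrib, mul_sum]
  refine ⟨?_, fun i j => ?_, fun i => ?_, fun j => ?_⟩
  · simp only [row_sum, sum_add_distrib, ← mul_sum, hp_sum, mul_one, hsum]
  · exact strictSign_mul_add_mul (hp_entry i j) (he_entry i j) ha hb
  · exact row_sum i ▸ strictSign_mul_add_mul (hp_row i) (he_row i) ha hb
  · exact col_sum j ▸ strictSign_mul_add_mul (hp_col j) (he_col j) ha hb

lemma not_isBounded_MRegion {p e : Fin m → Fin n → ℝ} (hp : p ∈ MRegion m n Ne rowN colN)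
    (he : e ∈ MCone m n Ne rowN colN) (hsum : ∑ i, ∑ j, e i j ≤ 0) (he0 : e ≠ 0) :
    ¬IsBounded (MRegion m n Ne rowN colN) := by
  set s := -∑ i, ∑ j, e i j with hs
  have hs0 : 0 ≤ s := by linarith
  set d := s • p + e
  have hd0 : d ≠ 0 := by
    intro hd
    obtain ⟨i, j, hij⟩ : ∃ i j, e i j ≠ 0 := by
      by_contra! h
      exact he0 (funext₂ h)
    have hdij : s * p i j + e i j = 0 := congrFun (congrFun hd i) j
    have hp_ij := hp.2.1 i j
    have he_ij := he.1 i j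
    by_cases h : (i, j) ∈ Ne
    · exact hij (le_antisymm (he_ij.1 h) (by nlinarith [hp_ij.1 h]))
    · exact hij (le_antisymm (by nlinarith [hp_ij.2 h]) (he_ij.2 h))
  have ray_mem (t : ℝ) (ht : 0 ≤ t) : p + t • d ∈ MRegion m n Ne rowN colN := by
    have : p + t • d = (1 + t * s) • p + t • e := by module
    rw [this]
    exact smul_add_smul_mem_MRegion hp he (by positivity) ht (by rw [hs]; ring)
  intro hbd
  obtain ⟨C, hC⟩ := hbd.exists_norm_le
  have hd : 0 < ‖d‖ := norm_pos_iff.mpr hd0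
  set t := (C + ‖p‖ + 1) / ‖d‖
  have ht : 0 ≤ t := div_nonneg (by linarith [hC p hp, norm_nonneg p]) hd.le
  have htd : ‖t • d‖ = C + ‖p‖ + 1 := by
    rw [norm_smul, Real.norm_of_nonneg ht, div_mul_cancel₀ _ hd.ne']
  have := norm_sub_le (p + t • d) p
  rw [add_sub_cancel_left] at this
  linarith [hC _ (ray_mem t ht)]

lemma single_column_mem_MCone {j : Fin n} {v : Fin m → ℝ}
    (hentry : ∀ i, WeakSign ((i, j) ∈ Ne) (v i)) (hrow : ∀ i, WeakSign (i ∈ rowN) (v i))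
    (hcol : WeakSign (j ∈ colN) (∑ i, v i)) :
    (fun i => Pi.single j (v i)) ∈ MCone m n Ne rowN colN := by
  refine ⟨fun i b => ?_, fun i => by simpa using hrow i, fun b => ?_⟩
  · exact weakSign_single (neg := fun b => (i, b) ∈ Ne) (hentry i) b
  · by_cases hb : b = j
    · subst hb
      simpa using hcol
    · simpa [hb] using WeakSign.zero _

lemma exists_mem_MCone_of_mem_Ne_rowN_colN {i : Fin m} {j : Fin n} (hij : (i, j) ∈ Ne)
    (hi : i ∈ rowN) (hj : j ∈ colN) :
    ∃ e ∈ MCone m n Ne rowN colN, ∑ i, ∑ j, e i j ≤ 0 ∧ e ≠ 0 := by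
  have hneg {P : Prop} (hP : P) : WeakSign P (-1) := ⟨fun _ => by norm_num, absurd hP⟩
  refine ⟨fun a => Pi.single j ((Pi.single i (-1) : Fin m → ℝ) a), ?_, by simp, fun h => ?_⟩
  · exact single_column_mem_MCone (weakSign_single (hneg hij)) (weakSign_single (hneg hi))
      (by simpa using hneg hj)
  · simpa using congrFun (congrFun h i) j

lemma exists_mem_MCone_of_mem_Ne_rowN_of_not_mem_Ne_rowN {i i' : Fin m} {j : Fin n}
    (hij : (i, j) ∈ Ne) (hi : i ∈ rowN) (hi'j : (i', j) ∉ Ne) (hi' : i' ∉ rowN) :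
    ∃ e ∈ MCone m n Ne rowN colN, ∑ i, ∑ j, e i j ≤ 0 ∧ e ≠ 0 := by
  have hii' : i' ≠ i := fun h => hi' (h ▸ hi)
  have hpos {P : Prop} (hP : ¬P) : WeakSign P 1 := ⟨fun h => absurd h hP, fun _ => zero_le_one⟩
  have hneg {P : Prop} (hP : P) : WeakSign P (-1) := ⟨fun _ => by norm_num, absurd hP⟩
  set v : Fin m → ℝ := Pi.single i' 1 + Pi.single i (-1)
  refine ⟨fun a => Pi.single j (v a), ?_, by simp [v, sum_add_distrib], fun h => ?_⟩
  · refine single_column_mem_MCone (fun a => ?_) (fun a => ?_)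
      (by simpa [v, sum_add_distrib] using WeakSign.zero _)
    · exact (weakSign_single (neg := fun a => (a, j) ∈ Ne) (hpos hi'j) a).add
        (weakSign_single (neg := fun a => (a, j) ∈ Ne) (hneg hij) a)
    · exact WeakSign.add (weakSign_single (hpos hi') a) (weakSign_single (hneg hi) a)
  · simpa [v, hii'] using congrFun (congrFun h i') j

open Classical in
lemma exists_mem_MCone_of_restrict {p : Fin m → Fin n → ℝ} (hp : p ∈ MRegion m n Ne rowN colN)
    {i₀ : Fin m} (hi₀ : i₀ ∈ rowN) (hcol : ∀ i ∈ rowN, ∀ j, (i, j) ∈ Ne → j ∉ colN)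
    (hrow : ∀ i ∈ rowN, ∀ j i', (i, j) ∈ Ne → (i', j) ∉ Ne → i' ∈ rowN) :
    ∃ e ∈ MCone m n Ne rowN colN, ∑ i, ∑ j, e i j ≤ 0 ∧ e ≠ 0 := by
  obtain ⟨-, hp_entry, hp_row, hp_col⟩ := hp
  set J : Set (Fin n) := {j | ∃ i ∈ rowN, (i, j) ∈ Ne}
  set e : Fin m → Fin n → ℝ := fun a b => if a ∈ rowN ∧ b ∈ J then p a b else 0
  have row_neg (a : Fin m) (ha : a ∈ rowN) : ∑ b, e a b < 0 := by
    refine (sum_le_sum fun b _ => ?_).trans_lt ((hp_row a).1 ha)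
    by_cases hb : b ∈ J
    · simp [e, ha, hb]
    · have hab : (a, b) ∉ Ne := fun hab => hb ⟨a, ha, hab⟩
      simpa [e, hb] using ((hp_entry a b).2 hab).le
  have row_zero (a : Fin m) (ha : a ∉ rowN) : ∑ b, e a b = 0 := by simp [e, ha]
  have col_pos (b : Fin n) (hb : b ∈ J) : 0 < ∑ a, e a b := by
    obtain ⟨i, hi, hib⟩ := hb
    refine ((hp_col b).2 (hcol i hi b hib)).trans_le (sum_le_sum fun a _ => ?_)
    by_cases ha : a ∈ rowN
    · simp [e, ha, show b ∈ J from ⟨i, hi, hib⟩]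
    · have hab : (a, b) ∈ Ne := by_contra fun hab => ha (hrow i hi b a hib hab)
      simpa [e, ha] using ((hp_entry a b).1 hab).le
  have hsum : ∑ a, ∑ b, e a b < 0 := by
    refine (sum_lt_sum (g := 0) (fun a _ => ?_) ⟨i₀, mem_univ _, row_neg i₀ hi₀⟩).trans_eq
      (sum_const_zero)
    by_cases ha : a ∈ rowN
    · exact (row_neg a ha).le
    · exact (row_zero a ha).le
  refine ⟨e, ⟨fun a b => ?_, fun a => ?_, fun b => ?_⟩, hsum.le, fun he => ?_⟩
  · by_cases h : a ∈ rowN ∧ b ∈ J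
    · simpa [e, h] using WeakSign.of_strict (hp_entry a b)
    · simpa [e, h] using WeakSign.zero _
  · by_cases ha : a ∈ rowN
    · exact ⟨fun _ => (row_neg a ha).le, absurd ha⟩
    · simpa [row_zero a ha] using WeakSign.zero _
  · by_cases hb : b ∈ J
    · obtain ⟨i, hi, hib⟩ := hb
      exact ⟨fun h => absurd h (hcol i hi b hib), fun _ => (col_pos b ⟨i, hi, hib⟩).le⟩
    · simpa [e, hb] using WeakSign.zero _
  · simp [he] at hsum

lemma exists_mem_MCone_of_mem_rowN {p : Fin m → Fin n → ℝ} (hp : p ∈ MRegion m n Ne rowN colN)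
    {i₀ : Fin m} (hi₀ : i₀ ∈ rowN) :
    ∃ e ∈ MCone m n Ne rowN colN, ∑ i, ∑ j, e i j ≤ 0 ∧ e ≠ 0 := by
  by_cases hcol : ∃ i ∈ rowN, ∃ j, (i, j) ∈ Ne ∧ j ∈ colN
  · obtain ⟨i, hi, j, hij, hj⟩ := hcol
    exact exists_mem_MCone_of_mem_Ne_rowN_colN hij hi hj
  by_cases hrow : ∃ i ∈ rowN, ∃ j i', (i, j) ∈ Ne ∧ (i', j) ∉ Ne ∧ i' ∉ rowN
  · obtain ⟨i, hi, j, i', hij, hi'j, hi'⟩ := hrow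
    exact exists_mem_MCone_of_mem_Ne_rowN_of_not_mem_Ne_rowN hij hi hi'j hi'
  push Not at hcol hrow
  exact exists_mem_MCone_of_restrict hp hi₀ hcol hrow

lemma rowN_eq_empty_of_isBounded (hne : (MRegion m n Ne rowN colN).Nonempty)
    (hbd : IsBounded (MRegion m n Ne rowN colN)) : rowN = ∅ := by
  obtain ⟨p, hp⟩ := hne
  refine Set.eq_empty_of_forall_notMem fun i₀ hi₀ => ?_
  obtain ⟨e, he, hsum, he0⟩ := exists_mem_MCone_of_mem_rowN hp hi₀
  exact not_isBounded_MRegion hp he hsum he0 hbd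

lemma flip_mem_MRegion {p : Fin m → Fin n → ℝ} (hp : p ∈ MRegion m n Ne rowN colN) :
    flip p ∈ MRegion n m (Prod.swap ⁻¹' Ne) colN rowN :=
  ⟨sum_comm.trans hp.1, fun j i => hp.2.1 i j, hp.2.2.2, hp.2.2.1⟩

lemma MRegion_swap :
    MRegion n m (Prod.swap ⁻¹' Ne) colN rowN = flip '' MRegion m n Ne rowN colN := by
  ext q
  refine ⟨fun hq => ⟨flip q, flip_mem_MRegion hq, rfl⟩, ?_⟩
  rintro ⟨p, hp, rfl⟩
  exact flip_mem_MRegion hp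

end

lemma norm_flip_le {ι κ E : Type*} [Fintype ι] [Fintype κ] [SeminormedAddCommGroup E]
    (f : ι → κ → E) : ‖flip f‖ ≤ ‖f‖ :=
  (pi_norm_le_iff_of_nonneg (norm_nonneg f)).2 fun j =>
    (pi_norm_le_iff_of_nonneg (norm_nonneg f)).2 fun i =>
      (norm_le_pi_norm (f i) j).trans (norm_le_pi_norm f i)

lemma Bornology.IsBounded.image_flip {ι κ E : Type*} [Fintype ι] [Fintype κ]
    [SeminormedAddCommGroup E] {s : Set (ι → κ → E)} (hs : IsBounded s) :
    IsBounded (flip '' s) := by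
  obtain ⟨C, hC⟩ := hs.exists_norm_le
  refine isBounded_iff_forall_norm_le.2 ⟨C, ?_⟩
  rintro _ ⟨f, hf, rfl⟩
  exact (norm_flip_le f).trans (hC f hf)

theorem mRegion_bounded_margins_positive_general {m n : ℕ}
    (Ne : Set (Fin m × Fin n)) (rowN : Set (Fin m)) (colN : Set (Fin n))
    (hne : (MRegion m n Ne rowN colN).Nonempty)
    (hbd : Bornology.IsBounded (MRegion m n Ne rowN colN)) :
    rowN = ∅ ∧ colN = ∅ := by
  refine ⟨rowN_eq_empty_of_isBounded hne hbd, ?_⟩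
  refine rowN_eq_empty_of_isBounded (Ne := Prod.swap ⁻¹' Ne) (rowN := colN) (colN := rowN) ?_ ?_
  · rw [MRegion_swap]
    exact hne.image flip
  · rw [MRegion_swap]
    exact hbd.image_flip

/-- If `M(N,P)` is nonempty and bounded then all row-sum and column-sum
constraints are positivity constraints: no row sum symbol and no column sum
symbol lies in `N`. -/
theorem mRegion_bounded_margins_positive {m n : ℕ} (hm : 2 ≤ m) (hn : 2 ≤ n)
    (Ne : Set (Fin m × Fin n)) (rowN : Set (Fin m)) (colN : Set (Fin n))
    (hne : (MRegion m n Ne rowN colN).Nonempty)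
    (hbd : Bornology.IsBounded (MRegion m n Ne rowN colN)) :
    rowN = ∅ ∧ colN = ∅ :=
  mRegion_bounded_margins_positive_general Ne rowN colN hne hbd
end

section
/- Let λ = (λ_1 ≥ ... ≥ λ_m) be a partition with λ_i ≤ n-1 for all i and λ_m = 0. Define N(λ) = {p_{ij} : j ≤ λ_i} (entries forced negative) and let all other entries, all row sums, and all column sums be forced positive. Then the region M(N(λ), P(λ)) of m×n real matrices with total sum 1 satisfying these strict sign constraints is nonempty. -/
lemma sum_aux {k : ℕ} (c : ℝ) (f : Fin k → ℝ)
    (hf : ∀ i, f i = -1 ∨ f i = c) (i₀ : Fin k) (h0 : f i₀ = c)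
    (hk : (k : ℝ) < c + 1) : 0 < ∑ i, f i := by
  have hc : (-1 : ℝ) ≤ c := by
    have : (0:ℝ) ≤ k := Nat.cast_nonneg k
    linarith
  have hle : ∀ i ∈ Finset.univ, (-1 + if i = i₀ then c + 1 else 0) ≤ f i := by
    intro i _
    by_cases h : i = i₀
    · simp [h, h0]
    · simp only [h, if_false, add_zero]
      rcases hf i with h1 | h1 <;> rw [h1] <;> linarith
  have h1 := Finset.sum_le_sum hle
  have hsum : ∑ i : Fin k, ((-1 : ℝ) + if i = i₀ then c + 1 else 0) = -k + (c + 1) := by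
    rw [Finset.sum_add_distrib, Finset.sum_const, Finset.sum_ite_eq' Finset.univ i₀]
    simp [Finset.card_univ]
  rw [hsum] at h1
  linarith


/-- For a partition `λ` with `λ_i ≤ n-1` and `λ_m = 0`, the region
`M(N(λ), P(λ))`, where `N(λ) = {(i,j) : j ≤ λ_i}` are the negative entries and
all other entries, all row sums and all column sums are positive, is nonempty. -/
theorem mRegion_partition_nonempty
    {m n : ℕ} (hm : 0 < m) (hn : 0 < n) (lam : Fin m → ℕ)
    (hmono : ∀ i i' : Fin m, i ≤ i' → lam i' ≤ lam i)
    (hbound : ∀ i, lam i ≤ n - 1)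
    (hlast : lam ⟨m - 1, by omega⟩ = 0) :
    (MRegion m n {q : Fin m × Fin n | (q.2 : ℕ) < lam q.1} ∅ ∅).Nonempty := by
  set c : ℝ := (m : ℝ) + n with hc
  set p : Fin m → Fin n → ℝ := fun i j => if (j : ℕ) < lam i then -1 else c with hp
  have hcpos : (0 : ℝ) < c := by
    have h1 : (0:ℝ) < m := Nat.cast_pos.2 hm
    have h2 : (0:ℝ) ≤ n := Nat.cast_nonneg n
    rw [hc]; linarith
  have hcases : ∀ i j, p i j = -1 ∨ p i j = c := by
    intro i j
    by_cases h : (j : ℕ) < lam i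
    · left; simp [hp, h]
    · right; simp [hp, h]
  have hrow : ∀ i, 0 < ∑ j, p i j := by
    intro i
    refine sum_aux c (fun j => p i j) (hcases i) ⟨n - 1, by omega⟩ ?_ ?_
    · have : ¬ ((n - 1 : ℕ) < lam i) := by have := hbound i; omega
      simp [hp, this]
    · have : (0:ℝ) < m := Nat.cast_pos.2 hm
      rw [hc]; linarith
  have hcol : ∀ j, 0 < ∑ i, p i j := by
    intro j
    refine sum_aux c (fun i => p i j) (fun i => hcases i j) ⟨m - 1, by omega⟩ ?_ ?_
    · have : ¬ ((j : ℕ) < lam ⟨m - 1, by omega⟩) := by rw [hlast]; omega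
      simp [hp, this]
    · have : (0:ℝ) < n := Nat.cast_pos.2 hn
      rw [hc]; linarith
  set S : ℝ := ∑ i, ∑ j, p i j with hSdef
  have hS : 0 < S := Finset.sum_pos (fun i _ => hrow i) ⟨⟨0, hm⟩, Finset.mem_univ _⟩
  refine ⟨fun i j => p i j / S, ?_, ?_, ?_, ?_⟩
  · simp only [← Finset.sum_div]
    exact div_self (ne_of_gt hS)
  · intro i j
    constructor
    · intro hmem
      have hlt : (j : ℕ) < lam i := hmem
      have hval : p i j = -1 := by simp [hp, hlt]
      show p i j / S < 0
      rw [hval]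
      exact div_neg_of_neg_of_pos (by norm_num) hS
    · intro hmem
      have h : ¬ ((j : ℕ) < lam i) := hmem
      have hval : p i j = c := by simp [hp, h]
      show 0 < p i j / S
      rw [hval]
      exact div_pos hcpos hS
  · intro i
    refine ⟨fun h => absurd h (Set.notMem_empty i), fun _ => ?_⟩
    rw [← Finset.sum_div]
    exact div_pos (hrow i) hS
  · intro j
    refine ⟨fun h => absurd h (Set.notMem_empty j), fun _ => ?_⟩
    rw [← Finset.sum_div]
    exact div_pos (hcol j) hS
end

section
/- Suppose N contains p_{ij} for all i ∈ [k+1,m] and j ∈ [l+1,n], while p_{i+} ∈ N exactly for i ∈ [k] and p_{+j} ∈ N exactly for j ∈ [l], with k < m and l < n. If additionally (after permutation to tableau form) every (i,j) ∈ P with i ≤ some i' and j ≤ some j' satisfies the configuration described in Case 4, then M(N,P) is empty; in particular, for any p satisfying the sign constraints, Σ_{(i,j)∈P, weighted} p_{ij} > 1 = p_{++}, a contradiction. -/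
/-- Case 4 of the boundedness analysis: suppose `N` contains all entries `p_{ij}`
with `i ∈ [k+1,m]`, `j ∈ [l+1,n]`, the row sums in `N` are exactly those with
`i ∈ [k]` and the column sums in `N` are exactly those with `j ∈ [l]` (`k < m`,
`l < n`).  If moreover there are `i' ≤ k`, `j' ≤ l` such that every entry in `P`
has row index `≤ i'` or column index `≤ j'`, while all entries with row index
`≤ i'` and column index `≤ j'` are in `P`, then `M(N,P)` is empty. -/
theorem mRegion_case4_empty {m n : ℕ}
    (Ne : Set (Fin m × Fin n)) (rowN : Set (Fin m)) (colN : Set (Fin n))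
    (k l : ℕ) (hk : k < m) (hl : l < n)
    (hNblock : ∀ (i : Fin m) (j : Fin n), k ≤ (i : ℕ) → l ≤ (j : ℕ) → (i, j) ∈ Ne)
    (hrowN : ∀ i : Fin m, i ∈ rowN ↔ (i : ℕ) < k)
    (hcolN : ∀ j : Fin n, j ∈ colN ↔ (j : ℕ) < l)
    (i' j' : ℕ) (hi' : i' ≤ k) (hj' : j' ≤ l)
    (hP : ∀ (i : Fin m) (j : Fin n), (i, j) ∉ Ne → (i : ℕ) < i' ∨ (j : ℕ) < j')
    (hA : ∀ (i : Fin m) (j : Fin n), (i : ℕ) < i' → (j : ℕ) < j' → (i, j) ∉ Ne) :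
    MRegion m n Ne rowN colN = ∅ := by
  ext p
  simp only [MRegion, Set.mem_setOf_eq, Set.mem_empty_iff_false, iff_false]
  rintro ⟨hsum, hent, hrow, hcol⟩
  set A := ∑ i ∈ Finset.univ.filter (fun i : Fin m => (i : ℕ) < i'), ∑ j, p i j with hAdef
  set B := ∑ j ∈ Finset.univ.filter (fun j : Fin n => (j : ℕ) < j'), ∑ i, p i j with hBdef
  have hAle : A ≤ 0 := Finset.sum_nonpos (by
    intro i hi
    simp only [Finset.mem_filter] at hi
    exact le_of_lt ((hrow i).1 ((hrowN i).2 (lt_of_lt_of_le hi.2 hi'))))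
  have hBle : B ≤ 0 := Finset.sum_nonpos (by
    intro j hj
    simp only [Finset.mem_filter] at hj
    exact le_of_lt ((hcol j).1 ((hcolN j).2 (lt_of_lt_of_le hj.2 hj'))))
  have key : (1 : ℝ) ≤ A + B := by
    have h1 : A = ∑ i : Fin m, ∑ j : Fin n, (if (i : ℕ) < i' then p i j else 0) := by
      rw [hAdef, Finset.sum_filter]
      refine Finset.sum_congr rfl fun i _ => ?_
      split <;> simp
    have h2 : B = ∑ i : Fin m, ∑ j : Fin n, (if (j : ℕ) < j' then p i j else 0) := by
      rw [hBdef, Finset.sum_comm]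
      refine Finset.sum_congr rfl fun i _ => ?_
      rw [Finset.sum_filter]
    rw [← hsum, h1, h2, ← Finset.sum_add_distrib]
    refine Finset.sum_le_sum fun i _ => ?_
    rw [← Finset.sum_add_distrib]
    refine Finset.sum_le_sum fun j _ => ?_
    by_cases hi : (i : ℕ) < i' <;> by_cases hj : (j : ℕ) < j' <;> simp [hi, hj]
    · have := (hent i j).2 (hA i j hi hj)
      linarith
    · have hNe : (i, j) ∈ Ne := by
        by_contra h
        rcases hP i j h with h' | h'
        · exact hi h'
        · exact hj h'
      linarith [(hent i j).1 hNe]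
  linarith
end

section
/- B(m,n) satisfies B(m,n) = Σ_{i=0}^{min(m,n)} (i!)^2 S(m+1,i+1) S(n+1,i+1), where S denotes Stirling numbers of the second kind; in particular B(m,n) = B(n,m). -/
open Finset

/-- un-normalized sum -/
noncomputable def T (l k : ℕ) : ℚ :=
  ∑ i ∈ Finset.range (k + 1), (-1 : ℚ) ^ (k - i) * (Nat.choose k i : ℚ) * (i : ℚ) ^ l

lemma stirling2_eq_T (l k : ℕ) : stirling2 l k = T l k / (Nat.factorial k : ℚ) := by
  rw [stirling2, T]; ring

lemma T_zero_succ (k : ℕ) : T 0 (k + 1) = 0 := by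
  have h := add_pow (1 : ℚ) (-1) (k + 1)
  simp only [one_pow, one_mul, add_neg_cancel] at h
  rw [zero_pow (by omega)] at h
  rw [T]
  simp only [pow_zero, mul_one]
  exact h.symm

lemma T_succ (l k : ℕ) : T (l + 1) (k + 1) = (k + 1) * T l (k + 1) + (k + 1) * T l k := by
  have key : ∀ i, i ∈ Finset.range (k + 2) →
      (-1 : ℚ) ^ (k + 1 - i) * (Nat.choose (k+1) i : ℚ) * (i : ℚ) ^ (l+1)
      = (k + 1 : ℚ) * ((-1 : ℚ) ^ (k + 1 - i) * (Nat.choose (k+1) i : ℚ) * (i : ℚ) ^ l)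
        - ((k + 1 : ℚ) * (Nat.choose k i : ℚ)) * ((-1 : ℚ) ^ (k + 1 - i) * (i : ℚ) ^ l) := by
    intro i hi
    simp only [Finset.mem_range] at hi
    have hc : ((k + 1 - i : ℕ) : ℚ) * (Nat.choose (k+1) i : ℚ) = (k + 1 : ℚ) * (Nat.choose k i : ℚ) := by
      have := Nat.choose_mul_succ_eq k i
      have h2 : ((Nat.choose k i * (k + 1) : ℕ) : ℚ) = ((Nat.choose (k+1) i * (k + 1 - i) : ℕ) : ℚ) := by
        exact_mod_cast congrArg (Nat.cast : ℕ → ℚ) this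
      push_cast at h2
      linarith
    have hcast : ((k + 1 - i : ℕ) : ℚ) = (k + 1 : ℚ) - (i : ℚ) := by
      have : i ≤ k + 1 := by omega
      push_cast [this]; ring
    rw [hcast] at hc
    have hi' : (i : ℚ) ^ (l + 1) = (i : ℚ) * (i : ℚ) ^ l := by ring
    rw [hi']
    linear_combination (-((-1:ℚ)^(k+1-i) * (i:ℚ)^l)) * hc
  rw [T, Finset.sum_congr rfl key, Finset.sum_sub_distrib, ← Finset.mul_sum]
  have e1 : ∑ i ∈ Finset.range (k + 2), (-1:ℚ)^(k+1-i) * (Nat.choose (k+1) i : ℚ) * (i:ℚ)^l = T l (k+1) := rfl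
  rw [e1]
  have e2 : ∑ i ∈ Finset.range (k + 2), ((k+1:ℚ) * (Nat.choose k i : ℚ)) * ((-1:ℚ)^(k+1-i) * (i:ℚ)^l)
      = -( (k+1:ℚ) * T l k) := by
    rw [Finset.sum_range_succ]
    simp only [Nat.choose_succ_self, Nat.cast_zero, mul_zero, zero_mul, add_zero]
    rw [T, Finset.mul_sum, ← Finset.sum_neg_distrib]
    apply Finset.sum_congr rfl
    intro i hi
    simp only [Finset.mem_range] at hi
    have : k + 1 - i = (k - i) + 1 := by omega
    rw [this, pow_succ]
    ring
  rw [e2]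
  ring

lemma stirling2_succ_succ (l k : ℕ) :
    stirling2 (l + 1) (k + 1) = (k + 1) * stirling2 l (k + 1) + stirling2 l k := by
  have hk : (Nat.factorial (k+1) : ℚ) ≠ 0 := by positivity
  have hk' : (Nat.factorial k : ℚ) ≠ 0 := by positivity
  have hfac : (Nat.factorial (k+1) : ℚ) = (k+1) * Nat.factorial k := by
    rw [Nat.factorial_succ]; push_cast; ring
  rw [stirling2_eq_T, stirling2_eq_T, stirling2_eq_T, T_succ, hfac]
  field_simp

lemma stirling2_zero_succ (k : ℕ) : stirling2 0 (k + 1) = 0 := by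
  rw [stirling2_eq_T, T_zero_succ, zero_div]

lemma stirling2_of_lt {l k : ℕ} (h : l < k) : stirling2 l k = 0 := by
  induction l generalizing k with
  | zero =>
    obtain ⟨k', rfl⟩ : ∃ k', k = k' + 1 := ⟨k - 1, by omega⟩
    exact stirling2_zero_succ k'
  | succ l ih =>
    obtain ⟨k', rfl⟩ : ∃ k', k = k' + 1 := ⟨k - 1, by omega⟩
    rw [stirling2_succ_succ, ih (by omega), ih (by omega)]
    ring

lemma stirling2_zero_zero : stirling2 0 0 = 1 := by
  simp [stirling2]

lemma stirling2_one_one : stirling2 1 1 = 1 := by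
  norm_num [stirling2, Finset.sum_range_succ]

lemma stirling2_succ_zero (l : ℕ) : stirling2 (l + 1) 0 = 0 := by
  simp [stirling2]

lemma worpitzky (n x : ℕ) :
    ((x:ℚ)+1)^n = ∑ j ∈ Finset.range (n+1),
      (Nat.factorial j : ℚ) * stirling2 (n+1) (j+1) * (Nat.choose x j : ℚ) := by
  induction n with
  | zero => simp [stirling2_one_one]
  | succ n ih =>
    have choose_id : ∀ j : ℕ, ((x:ℚ)+1) * (Nat.choose x j : ℚ)
        = ((j:ℚ)+1) * (Nat.choose x j : ℚ) + ((j:ℚ)+1) * (Nat.choose x (j+1) : ℚ) := by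
      intro j
      rcases le_or_gt j x with h | h
      · have h1 := Nat.choose_succ_right_eq x j
        have h2 : ((Nat.choose x (j+1) * (j+1) : ℕ) : ℚ) = ((Nat.choose x j * (x - j) : ℕ) : ℚ) := by
          exact_mod_cast congrArg (Nat.cast : ℕ → ℚ) h1
        push_cast [Nat.cast_sub h] at h2
        linarith
      · rw [Nat.choose_eq_zero_of_lt h, Nat.choose_eq_zero_of_lt (by omega)]
        simp
    have step : ((x:ℚ)+1)^(n+1) = ∑ j ∈ Finset.range (n+1),
        ((Nat.factorial (j+1) : ℚ) * stirling2 (n+1) (j+1) * (Nat.choose x j : ℚ)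
         + (Nat.factorial (j+1) : ℚ) * stirling2 (n+1) (j+1) * (Nat.choose x (j+1) : ℚ)) := by
      rw [pow_succ, ih, Finset.sum_mul]
      apply Finset.sum_congr rfl
      intro j hj
      rw [Nat.factorial_succ]
      push_cast
      linear_combination ((Nat.factorial j : ℚ) * stirling2 (n+1) (j+1)) * choose_id j
    rw [step, Finset.sum_add_distrib]
    have e2 : ∑ j ∈ Finset.range (n+1),
        (Nat.factorial (j+1):ℚ) * stirling2 (n+1) (j+1) * (Nat.choose x (j+1):ℚ)
        = ∑ j ∈ Finset.range (n+2),
          (Nat.factorial j : ℚ) * stirling2 (n+1) j * (Nat.choose x j : ℚ) := by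
      rw [Finset.sum_range_succ'
        (fun j => (Nat.factorial j : ℚ) * stirling2 (n+1) j * (Nat.choose x j : ℚ)) (n+1)]
      simp [stirling2_succ_zero]
    rw [e2]
    have e3 : ∑ j ∈ Finset.range (n+2),
        (Nat.factorial j : ℚ) * stirling2 (n+1+1) (j+1) * (Nat.choose x j : ℚ)
        = ∑ j ∈ Finset.range (n+2),
          ((Nat.factorial (j+1):ℚ) * stirling2 (n+1) (j+1) * (Nat.choose x j:ℚ)
           + (Nat.factorial j : ℚ) * stirling2 (n+1) j * (Nat.choose x j : ℚ)) := by
      apply Finset.sum_congr rfl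
      intro j _
      rw [stirling2_succ_succ (n+1) j, Nat.factorial_succ]
      push_cast
      ring
    rw [e3, Finset.sum_add_distrib, Finset.sum_range_succ
      (fun j => (Nat.factorial (j+1):ℚ) * stirling2 (n+1) (j+1) * (Nat.choose x j:ℚ)) (n+1),
      stirling2_of_lt (show n+1 < n+2 by omega)]
    ring

lemma keyL (m : ℕ) : ∀ j : ℕ,
    ∑ i ∈ Finset.range (m+1),
      (-1:ℚ)^(m-i) * (Nat.factorial i : ℚ) * stirling2 m i * (Nat.choose i j : ℚ)
    = (Nat.factorial j : ℚ) * stirling2 (m+1) (j+1) := by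
  induction m with
  | zero =>
    intro j
    cases j with
    | zero => simp [stirling2_zero_zero, stirling2_one_one]
    | succ j =>
      rw [Finset.sum_range_one]
      rw [stirling2_of_lt (show 1 < j+1+1 by omega),
        Nat.choose_eq_zero_of_lt (show 0 < j+1 by omega)]
      simp
  | succ m ih =>
    intro j
    -- Step 1: rewrite LHS as sum of brackets
    have hLA : ∑ i ∈ Finset.range (m+2),
        (-1:ℚ)^(m+1-i) * (Nat.factorial i : ℚ) * stirling2 (m+1) i * (Nat.choose i j : ℚ)
        = ∑ i ∈ Finset.range (m+1),
          (-1:ℚ)^(m-i) * (Nat.factorial i : ℚ) * stirling2 m i *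
            (((i:ℚ)+1) * (Nat.choose (i+1) j : ℚ) - (i:ℚ) * (Nat.choose i j : ℚ)) := by
      rw [Finset.sum_range_succ' (fun i =>
        (-1:ℚ)^(m+1-i) * (Nat.factorial i : ℚ) * stirling2 (m+1) i * (Nat.choose i j : ℚ)) (m+1)]
      simp only [stirling2_succ_zero, mul_zero, zero_mul, add_zero, Nat.succ_sub_succ]
      -- now LHS = ∑_{i∈range(m+1)} (-1)^(m-i) (i+1)! S(m+1,i+1) C(i+1,j)
      have expand : ∀ i ∈ Finset.range (m+1),
          (-1:ℚ)^(m-i) * (Nat.factorial (i+1) : ℚ) * stirling2 (m+1) (i+1) * (Nat.choose (i+1) j : ℚ)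
          = ((-1:ℚ)^(m-i) * (Nat.factorial (i+1) : ℚ) * ((i:ℚ)+1) * stirling2 m (i+1) * (Nat.choose (i+1) j : ℚ))
            + ((-1:ℚ)^(m-i) * (Nat.factorial i : ℚ) * stirling2 m i * (((i:ℚ)+1) * (Nat.choose (i+1) j : ℚ))) := by
        intro i _
        rw [stirling2_succ_succ m i, Nat.factorial_succ]
        push_cast
        ring
      rw [Finset.sum_congr rfl expand, Finset.sum_add_distrib]
      have expand2 : ∀ i ∈ Finset.range (m+1),
          (-1:ℚ)^(m-i) * (Nat.factorial i : ℚ) * stirling2 m i *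
            (((i:ℚ)+1) * (Nat.choose (i+1) j : ℚ) - (i:ℚ) * (Nat.choose i j : ℚ))
          = ((-1:ℚ)^(m-i) * (Nat.factorial i : ℚ) * stirling2 m i * (((i:ℚ)+1) * (Nat.choose (i+1) j : ℚ)))
            - ((-1:ℚ)^(m-i) * (Nat.factorial i : ℚ) * stirling2 m i * ((i:ℚ) * (Nat.choose i j : ℚ))) := by
        intro i _; ring
      rw [Finset.sum_congr rfl expand2, Finset.sum_sub_distrib]
      -- remains: P + Q = Q - A2  i.e. P = -A2
      have hA2 : ∑ i ∈ Finset.range (m+1),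
          (-1:ℚ)^(m-i) * (Nat.factorial i : ℚ) * stirling2 m i * ((i:ℚ) * (Nat.choose i j : ℚ))
          = ∑ i ∈ Finset.range m,
            (-1:ℚ)^(m-(i+1)) * (Nat.factorial (i+1) : ℚ) * stirling2 m (i+1) * (((i:ℚ)+1) * (Nat.choose (i+1) j : ℚ)) := by
        rw [Finset.sum_range_succ' (fun i =>
          (-1:ℚ)^(m-i) * (Nat.factorial i : ℚ) * stirling2 m i * ((i:ℚ) * (Nat.choose i j : ℚ))) m]
        push_cast
        simp
      have hP : ∑ i ∈ Finset.range (m+1),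
          (-1:ℚ)^(m-i) * (Nat.factorial (i+1) : ℚ) * ((i:ℚ)+1) * stirling2 m (i+1) * (Nat.choose (i+1) j : ℚ)
          = ∑ i ∈ Finset.range m,
            (-1:ℚ)^(m-i) * (Nat.factorial (i+1) : ℚ) * ((i:ℚ)+1) * stirling2 m (i+1) * (Nat.choose (i+1) j : ℚ) := by
        rw [Finset.sum_range_succ, stirling2_of_lt (show m < m+1 by omega)]
        ring
      rw [hA2, hP]
      have neg : ∀ i ∈ Finset.range m,
          (-1:ℚ)^(m-(i+1)) * (Nat.factorial (i+1) : ℚ) * stirling2 m (i+1) * (((i:ℚ)+1) * (Nat.choose (i+1) j : ℚ))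
          = -((-1:ℚ)^(m-i) * (Nat.factorial (i+1) : ℚ) * ((i:ℚ)+1) * stirling2 m (i+1) * (Nat.choose (i+1) j : ℚ)) := by
        intro i hi
        simp only [Finset.mem_range] at hi
        have hmi : m - i = (m - (i+1)) + 1 := by omega
        rw [hmi, pow_succ]
        ring
      rw [Finset.sum_congr rfl neg]
      rw [Finset.sum_neg_distrib]
      ring
    rw [hLA]
    -- Step 2: bracket identity and conclusion, by cases on j
    cases j with
    | zero =>
      have br : ∀ i ∈ Finset.range (m+1),
          (-1:ℚ)^(m-i) * (Nat.factorial i : ℚ) * stirling2 m i *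
            (((i:ℚ)+1) * (Nat.choose (i+1) 0 : ℚ) - (i:ℚ) * (Nat.choose i 0 : ℚ))
          = (-1:ℚ)^(m-i) * (Nat.factorial i : ℚ) * stirling2 m i * (Nat.choose i 0 : ℚ) := by
        intro i _
        simp only [Nat.choose_zero_right, Nat.cast_one]
        ring
      rw [Finset.sum_congr rfl br, ih 0]
      rw [show m+1+1 = (m+1)+1 from rfl, stirling2_succ_succ (m+1) 0, stirling2_succ_zero]
      push_cast
      ring
    | succ j' =>
      have br : ∀ i ∈ Finset.range (m+1),
          (-1:ℚ)^(m-i) * (Nat.factorial i : ℚ) * stirling2 m i *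
            (((i:ℚ)+1) * (Nat.choose (i+1) (j'+1) : ℚ) - (i:ℚ) * (Nat.choose i (j'+1) : ℚ))
          = ((j':ℚ)+2) * ((-1:ℚ)^(m-i) * (Nat.factorial i : ℚ) * stirling2 m i * (Nat.choose i (j'+1) : ℚ))
            + ((j':ℚ)+1) * ((-1:ℚ)^(m-i) * (Nat.factorial i : ℚ) * stirling2 m i * (Nat.choose i j' : ℚ)) := by
        intro i _
        have pas : (Nat.choose (i+1) (j'+1) : ℚ) = (Nat.choose i j' : ℚ) + (Nat.choose i (j'+1) : ℚ) := by
          rw [Nat.choose_succ_succ]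
          push_cast; ring
        have smc : ((i:ℚ)+1) * (Nat.choose i j' : ℚ) = ((j':ℚ)+1) * (Nat.choose (i+1) (j'+1) : ℚ) := by
          have := Nat.add_one_mul_choose_eq i j'
          have h2 := congrArg (Nat.cast : ℕ → ℚ) this
          push_cast at h2
          linarith
        linear_combination ((-1:ℚ)^(m-i) * (Nat.factorial i : ℚ) * stirling2 m i) *
          (((i:ℚ)+1) * pas + smc + ((j':ℚ)+1) * pas)
      rw [Finset.sum_congr rfl br, Finset.sum_add_distrib, ← Finset.mul_sum, ← Finset.mul_sum,
        ih (j'+1), ih j']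
      rw [show m+1+1 = (m+1)+1 from rfl, stirling2_succ_succ (m+1) (j'+1), Nat.factorial_succ]
      push_cast
      ring

lemma polyBernoulli_eq_sum (m n : ℕ) :
    polyBernoulli m n = ∑ j ∈ Finset.range (n+1),
      (Nat.factorial j : ℚ)^2 * stirling2 (m+1) (j+1) * stirling2 (n+1) (j+1) := by
  calc polyBernoulli m n
      = ∑ i ∈ Finset.range (m+1), ∑ j ∈ Finset.range (n+1),
          ((Nat.factorial j : ℚ) * stirling2 (n+1) (j+1)) *
            ((-1:ℚ)^(m-i) * (Nat.factorial i : ℚ) * stirling2 m i * (Nat.choose i j : ℚ)) := by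
        rw [polyBernoulli]
        apply Finset.sum_congr rfl
        intro i _
        rw [worpitzky n i, Finset.mul_sum]
        apply Finset.sum_congr rfl
        intro j _
        ring
    _ = ∑ j ∈ Finset.range (n+1), ((Nat.factorial j : ℚ) * stirling2 (n+1) (j+1)) *
          ∑ i ∈ Finset.range (m+1),
            (-1:ℚ)^(m-i) * (Nat.factorial i : ℚ) * stirling2 m i * (Nat.choose i j : ℚ) := by
        rw [Finset.sum_comm]
        apply Finset.sum_congr rfl
        intro j _
        rw [Finset.mul_sum]
    _ = ∑ j ∈ Finset.range (n+1),
          (Nat.factorial j : ℚ)^2 * stirling2 (m+1) (j+1) * stirling2 (n+1) (j+1) := by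
        apply Finset.sum_congr rfl
        intro j _
        rw [keyL m j]
        ring

lemma polyBernoulli_eq_min (m n : ℕ) :
    polyBernoulli m n = ∑ j ∈ Finset.range (min m n + 1),
      (Nat.factorial j : ℚ)^2 * stirling2 (m+1) (j+1) * stirling2 (n+1) (j+1) := by
  rw [polyBernoulli_eq_sum]
  symm
  apply Finset.sum_subset
  · intro j hj
    simp only [Finset.mem_range] at hj ⊢
    omega
  · intro j hj hj'
    simp only [Finset.mem_range] at hj hj'
    rw [stirling2_of_lt (show m + 1 < j + 1 by omega)]
    ring

/-- `B(m,n) = ∑_{i=0}^{min(m,n)} (i!)² S(m+1,i+1) S(n+1,i+1)`; in particular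
`B(m,n) = B(n,m)`. -/
theorem polyBernoulli_formula (m n : ℕ) :
    (polyBernoulli m n =
      ∑ i ∈ Finset.range (min m n + 1),
        (Nat.factorial i : ℚ) ^ 2 * stirling2 (m + 1) (i + 1) * stirling2 (n + 1) (i + 1)) ∧
    polyBernoulli m n = polyBernoulli n m := by
  constructor
  · exact polyBernoulli_eq_min m n
  · rw [polyBernoulli_eq_min m n, polyBernoulli_eq_min n m, min_comm n m]
    apply Finset.sum_congr rfl
    intro j _
    ring
end

section
/- The number of 2×n lonesum 0/1 matrices, i.e., the number of 2×n matrices over {0,1} with no 2×2 submatrix pattern [[1,0],[0,1]] or [[0,1],[1,0]], equals B(2,n) = 2·3^n − 2^n. -/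
lemma lonesum_iff {n : ℕ} (A : Matrix (Fin 2) (Fin n) Bool) :
    IsLonesum A ↔
      (∀ j, ¬(A 0 j = true ∧ A 1 j = false)) ∨ (∀ j, ¬(A 0 j = false ∧ A 1 j = true)) := by
  constructor
  · intro h
    by_contra hc
    push_neg at hc
    obtain ⟨⟨j, hj0, hj1⟩, ⟨l, hl0, hl1⟩⟩ := hc
    rcases lt_trichotomy j l with hjl | hjl | hjl
    · exact (h 0 1 j l (by decide) hjl).1 ⟨hj0, hl0, hj1, hl1⟩
    · subst hjl; rw [hj0] at hl0; exact absurd hl0 (by simp)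
    · exact (h 0 1 l j (by decide) hjl).2 ⟨hl0, hj0, hl1, hj1⟩
  · intro h i k j l hik hjl
    have hi : i = 0 := by omega
    have hk : k = 1 := by omega
    subst hi hk
    rcases h with h | h
    · exact ⟨fun ⟨a, _, b, _⟩ => h j ⟨a, b⟩, fun ⟨_, a, _, b⟩ => h l ⟨a, b⟩⟩
    · exact ⟨fun ⟨_, a, _, b⟩ => h l ⟨a, b⟩, fun ⟨a, _, b, _⟩ => h j ⟨a, b⟩⟩

lemma card_col (n : ℕ) (p : (Fin 2 → Bool) → Prop) [DecidablePred p] :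
    Nat.card {A : Matrix (Fin 2) (Fin n) Bool // ∀ j, p (fun i => A i j)} =
      (Nat.card {b : Fin 2 → Bool // p b}) ^ n := by
  have e : {A : Matrix (Fin 2) (Fin n) Bool // ∀ j, p (fun i => A i j)} ≃
      (Fin n → {b // p b}) :=
    ((Equiv.piComm (fun _ _ => Bool)).subtypeEquiv (fun A => Iff.rfl)).trans
      (Equiv.subtypePiEquivPi)
  rw [Nat.card_congr e, Nat.card_pi]
  simp

lemma c1 : Nat.card {b : Fin 2 → Bool // ¬(b 0 = true ∧ b 1 = false)} = 3 := by
  rw [Nat.card_eq_fintype_card]; decide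

lemma c2 : Nat.card {b : Fin 2 → Bool // ¬(b 0 = false ∧ b 1 = true)} = 3 := by
  rw [Nat.card_eq_fintype_card]; decide

lemma c3 : Nat.card {b : Fin 2 → Bool // ¬(b 0 = true ∧ b 1 = false) ∧ ¬(b 0 = false ∧ b 1 = true)} = 2 := by
  rw [Nat.card_eq_fintype_card]; decide

/-- The number of 2×n lonesum 0/1 matrices equals `2·3^n - 2^n`. -/
theorem card_lonesum_two_rows (n : ℕ) :
    (Nat.card {A : Matrix (Fin 2) (Fin n) Bool // IsLonesum A} : ℤ) =
      2 * 3 ^ n - 2 ^ n := by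
  classical
  set P : Matrix (Fin 2) (Fin n) Bool → Prop :=
    fun A => ∀ j, ¬(A 0 j = true ∧ A 1 j = false) with hP
  set Q : Matrix (Fin 2) (Fin n) Bool → Prop :=
    fun A => ∀ j, ¬(A 0 j = false ∧ A 1 j = true) with hQ
  have h1 : Nat.card {A : Matrix (Fin 2) (Fin n) Bool // IsLonesum A} =
      Nat.card {A : Matrix (Fin 2) (Fin n) Bool // P A ∨ Q A} :=
    Nat.card_congr (Equiv.subtypeEquivRight (fun A => lonesum_iff A))
  have hPcard : Nat.card {A : Matrix (Fin 2) (Fin n) Bool // P A} = 3 ^ n := by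
    have h := card_col n (fun b => ¬(b 0 = true ∧ b 1 = false))
    rw [c1] at h
    exact h
  have hQcard : Nat.card {A : Matrix (Fin 2) (Fin n) Bool // Q A} = 3 ^ n := by
    have h := card_col n (fun b => ¬(b 0 = false ∧ b 1 = true))
    rw [c2] at h
    exact h
  have hPQcard : Nat.card {A : Matrix (Fin 2) (Fin n) Bool // P A ∧ Q A} = 2 ^ n := by
    have h2 : Nat.card {A : Matrix (Fin 2) (Fin n) Bool // P A ∧ Q A} =
        Nat.card {A : Matrix (Fin 2) (Fin n) Bool //
          ∀ j, (fun b : Fin 2 → Bool => ¬(b 0 = true ∧ b 1 = false) ∧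
            ¬(b 0 = false ∧ b 1 = true)) (fun i => A i j)} := by
      apply Nat.card_congr
      apply Equiv.subtypeEquivRight
      intro A
      simp only [hP, hQ]
      exact ⟨fun ⟨h1, h2⟩ j => ⟨h1 j, h2 j⟩, fun h => ⟨fun j => (h j).1, fun j => (h j).2⟩⟩
    have h := card_col n (fun b => ¬(b 0 = true ∧ b 1 = false) ∧ ¬(b 0 = false ∧ b 1 = true))
    rw [c3] at h
    rw [h2, h]
  -- inclusion-exclusion
  have key : Nat.card {A : Matrix (Fin 2) (Fin n) Bool // P A ∨ Q A} +
      Nat.card {A : Matrix (Fin 2) (Fin n) Bool // P A ∧ Q A} =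
      Nat.card {A : Matrix (Fin 2) (Fin n) Bool // P A} +
      Nat.card {A : Matrix (Fin 2) (Fin n) Bool // Q A} := by
    simp only [Nat.card_eq_fintype_card, Fintype.card_subtype]
    rw [Finset.filter_or, Finset.filter_and, Finset.card_union_add_card_inter]
  rw [hPcard, hQcard, hPQcard] at key
  have keyZ : (Nat.card {A : Matrix (Fin 2) (Fin n) Bool // P A ∨ Q A} : ℤ) + 2 ^ n =
      3 ^ n + 3 ^ n := by exact_mod_cast key
  rw [h1]
  linarith
end
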